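/- arXiv:2204.04921 — 11 statements merged into one kernel-verified Lean document; each statement's English description precedes it below -/
import Mathlib

section
/- Let (X,d,m) be a uniformly locally doubling metric measure space and let f: X → ℝ be a Borel function. Endow X×ℝ with the distance d̃((x,t),(y,s)) = sqrt(d(x,y)² + (t−s)²) and the measure m⊗L¹, and let G_f = {(x,t) ∈ X×ℝ : t < f(x)} be the subgraph of f. Then: (i) if (x,t) belongs to the essential boundary ∂*G_f (computed in (X×ℝ, d̃, m⊗L¹)), then f^∧(x) ≤ t ≤ f^∨(x); (ii) if f^∧(x) < t < f^∨(x), then (x,t) ∈ ∂*G_f. In particular, if −∞ < f^∧(x) = f^∨(x) < +∞, then ∂*G_f ∩ ({x}×ℝ) ⊆ {(x, f̄(x))}, where f̄(x) = (f^∧(x)+f^∨(x))/2. -/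
open MeasureTheory Filter Set Metric Topology
open scoped ENNReal NNReal

noncomputable section

/-- The ℓ² product distance on `X × ℝ`:
`d̃((x,t),(y,s)) = sqrt(d(x,y)² + (t−s)²)`. -/
def dist2 {X : Type*} [PseudoMetricSpace X] (p q : X × ℝ) : ℝ :=
  Real.sqrt (dist p.1 q.1 ^ 2 + (p.2 - q.2) ^ 2)

/-- Balls in `X × ℝ` with respect to the ℓ² product distance. -/
def ball2 {X : Type*} [PseudoMetricSpace X] (p : X × ℝ) (r : ℝ) : Set (X × ℝ) :=
  {q | dist2 p q < r}

/-- The subgraph `G_f = {(x,t) : t < f(x)}` of a function `f : X → ℝ`. -/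
def subgraph {X : Type*} (f : X → ℝ) : Set (X × ℝ) :=
  {p | p.2 < f p.1}

/-- The approximate lower limit `f^∧(x)`, with values in `EReal` and the
convention `sup ∅ = ⊥ = −∞`. -/
def apLowerLimit {X : Type*} [PseudoMetricSpace X] [MeasurableSpace X]
    (m : Measure X) (f : X → ℝ) (x : X) : EReal :=
  sSup {t : EReal |
    Tendsto (fun r : ℝ => m (Metric.ball x r ∩ {y | (f y : EReal) < t}) / m (Metric.ball x r))
      (𝓝[>] (0 : ℝ)) (𝓝 0)}

/-- The approximate upper limit `f^∨(x)`, with values in `EReal` and the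
convention `inf ∅ = ⊤ = +∞`. -/
def apUpperLimit {X : Type*} [PseudoMetricSpace X] [MeasurableSpace X]
    (m : Measure X) (f : X → ℝ) (x : X) : EReal :=
  sInf {t : EReal |
    Tendsto (fun r : ℝ => m (Metric.ball x r ∩ {y | t < (f y : EReal)}) / m (Metric.ball x r))
      (𝓝[>] (0 : ℝ)) (𝓝 0)}

/-- The essential boundary of a set `E ⊆ X × ℝ`, computed with respect to the measure `μ`
and the ℓ² product distance on `X × ℝ`: points where both `E` and its complement have
positive upper density. -/
def essBoundary2 {X : Type*} [PseudoMetricSpace X] [MeasurableSpace X]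
    (μ : Measure (X × ℝ)) (E : Set (X × ℝ)) : Set (X × ℝ) :=
  {p | 0 < limsup (fun r : ℝ => μ (E ∩ ball2 p r) / μ (ball2 p r)) (𝓝[>] (0 : ℝ)) ∧
       0 < limsup (fun r : ℝ => μ (ball2 p r \ E) / μ (ball2 p r)) (𝓝[>] (0 : ℝ))}


/-! The ℓ² ball of radius `r` about `(x, t)` lies between the cylinders
`B_{r/2}(x) × (t - r/2, t + r/2)` and `B_r(x) × (t - r, t + r)`, so by doubling the density of
a set `A ⊆ X × ℝ` at `(x, t)` is comparable to a density at `x` in `X`. If `t < s < f^∧(x)`,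
then for `r < s - t` the part of the cylinder outside `G_f` lies over `{f < s}`, which has
density zero at `x`; symmetrically above `f^∨(x)`. Conversely, if `G_f` has density zero at
`(x, t)`, then for every `s > t` the slab `({f > s} ∩ B_r(x)) × (t, t + r) ⊆ G_f` forces
`{f > s}` to have density zero at `x`, i.e. `f^∨(x) ≤ s`. -/

section Geometry

variable {X : Type*} [PseudoMetricSpace X]

lemma ball2_subset_ball_prod_Ioo (x : X) (t r : ℝ) :
    ball2 (x, t) r ⊆ ball x r ×ˢ Ioo (t - r) (t + r) := by
  rintro ⟨y, u⟩ (h : √(dist x y ^ 2 + (t - u) ^ 2) < r)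
  have hd : |dist x y| < r := (Real.abs_le_sqrt (by nlinarith)).trans_lt h
  have hu : |t - u| < r := (Real.abs_le_sqrt (by nlinarith)).trans_lt h
  rw [abs_of_nonneg dist_nonneg] at hd
  rw [abs_lt] at hu
  exact ⟨mem_ball_comm.1 hd, by constructor <;> linarith⟩

lemma ball_prod_Ioo_subset_ball2 (x : X) (t : ℝ) {r : ℝ} (hr : 0 < r) :
    ball x (r / 2) ×ˢ Ioo (t - r / 2) (t + r / 2) ⊆ ball2 (x, t) r := by
  rintro ⟨y, u⟩ ⟨hy, hu⟩
  have hd : dist x y < r / 2 := mem_ball_comm.1 hy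
  have hu' : |t - u| < r / 2 := abs_lt.2 ⟨by linarith [hu.2], by linarith [hu.1]⟩
  show √(dist x y ^ 2 + (t - u) ^ 2) < r
  rw [Real.sqrt_lt' hr, ← sq_abs (t - u)]
  nlinarith [dist_nonneg (x := x) (y := y), abs_nonneg (t - u)]

end Geometry

section Density

variable {X : Type*} [PseudoMetricSpace X] [MeasurableSpace X]

def ballDensity (m : Measure X) (S : Set X) (x : X) (r : ℝ) : ℝ≥0∞ :=
  m (ball x r ∩ S) / m (ball x r)

def ball2Density (μ : Measure (X × ℝ)) (A : Set (X × ℝ)) (p : X × ℝ) (r : ℝ) : ℝ≥0∞ :=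
  μ (A ∩ ball2 p r) / μ (ball2 p r)

lemma mem_essBoundary2_iff {μ : Measure (X × ℝ)} {E : Set (X × ℝ)} {p : X × ℝ} :
    p ∈ essBoundary2 μ E ↔
      0 < limsup (ball2Density μ E p) (𝓝[>] 0) ∧ 0 < limsup (ball2Density μ Eᶜ p) (𝓝[>] 0) := by
  simp only [essBoundary2, sdiff_eq_compl_inter, mem_ofPred_eq]
  rfl

lemma ballDensity_mono (m : Measure X) {S T : Set X} (hST : S ⊆ T) (x : X) (r : ℝ) :
    ballDensity m S x r ≤ ballDensity m T x r :=
  ENNReal.div_le_div_right (measure_mono (inter_subset_inter_right _ hST)) _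

variable (m : Measure X) {C : ℝ≥0∞} (hC0 : C ≠ 0) (hCt : C ≠ ⊤)
include hC0 hCt

lemma ball2Density_le_of_subset {x : X} {t r : ℝ} (hr : 0 < r) {A : Set (X × ℝ)} {S : Set X}
    (hdbl : m (ball x r) ≤ C * m (ball x (r / 2)))
    (hA : A ∩ ball x r ×ˢ Ioo (t - r) (t + r) ⊆ Prod.fst ⁻¹' S) :
    ball2Density (m.prod volume) A (x, t) r ≤ 2 * C * ballDensity m S x r := by
  set a := m (ball x r ∩ S)
  set b := m (ball x (r / 2))
  set c := ENNReal.ofReal r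
  have hc0 : c ≠ 0 := (ENNReal.ofReal_pos.2 hr).ne'
  have hnum : m.prod volume (A ∩ ball2 (x, t) r) ≤ 2 * a * c :=
    calc m.prod volume (A ∩ ball2 (x, t) r)
        ≤ m.prod volume ((ball x r ∩ S) ×ˢ Ioo (t - r) (t + r)) := by
          refine measure_mono fun q ⟨hqA, hq⟩ => ?_
          have hq' := ball2_subset_ball_prod_Ioo x t r hq
          exact ⟨⟨hq'.1, hA ⟨hqA, hq'⟩⟩, hq'.2⟩
      _ = 2 * a * c := by
          rw [Measure.prod_prod, Real.volume_Ioo, show t + r - (t - r) = 2 * r by ring,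
            ENNReal.ofReal_mul zero_le_two, ENNReal.ofReal_ofNat, mul_left_comm, mul_assoc]
  have hden : b * c ≤ m.prod volume (ball2 (x, t) r) :=
    calc b * c = m.prod volume (ball x (r / 2) ×ˢ Ioo (t - r / 2) (t + r / 2)) := by
          rw [Measure.prod_prod, Real.volume_Ioo, show t + r / 2 - (t - r / 2) = r by ring]
      _ ≤ _ := measure_mono (ball_prod_Ioo_subset_ball2 x t hr)
  calc ball2Density (m.prod volume) A (x, t) r
      ≤ (2 * a * c) / (b * c) := ENNReal.div_le_div hnum hden
    _ = 2 * ((C * a) / (C * b)) := by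
        rw [ENNReal.mul_div_mul_right _ _ hc0 ENNReal.ofReal_ne_top,
          ENNReal.mul_div_mul_left _ _ hC0 hCt, mul_div_assoc]
    _ ≤ 2 * ((C * a) / m (ball x r)) := by gcongr
    _ = 2 * C * ballDensity m S x r := by rw [ballDensity, mul_div_assoc, mul_assoc]

lemma ballDensity_le_of_subset {x : X} {t r α : ℝ} (hr : 0 < r) {A : Set (X × ℝ)} {S : Set X}
    (hα : t - r ≤ α) (hα' : α ≤ t)
    (hdbl : m (ball x (2 * r)) ≤ C * m (ball x r))
    (hA : (ball x r ∩ S) ×ˢ Ioo α (α + r) ⊆ A) :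
    ballDensity m S x r ≤ 4 * C * ball2Density (m.prod volume) A (x, t) (2 * r) := by
  set a := m (ball x r ∩ S)
  set b := m (ball x r)
  set c := ENNReal.ofReal r
  have hc0 : c ≠ 0 := (ENNReal.ofReal_pos.2 hr).ne'
  have h4C0 : 4 * C ≠ 0 := mul_ne_zero four_ne_zero hC0
  have h4Ct : 4 * C ≠ ⊤ := ENNReal.mul_ne_top ENNReal.ofNat_ne_top hCt
  have hnum : a * c ≤ m.prod volume (A ∩ ball2 (x, t) (2 * r)) :=
    calc a * c = m.prod volume ((ball x r ∩ S) ×ˢ Ioo α (α + r)) := by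
          rw [Measure.prod_prod, Real.volume_Ioo, add_sub_cancel_left]
      _ ≤ _ := by
          refine measure_mono fun q hq =>
            ⟨hA hq, ball_prod_Ioo_subset_ball2 x t (by positivity) ?_⟩
          rw [mul_div_cancel_left₀ r two_ne_zero]
          exact ⟨hq.1.1, by linarith [hq.2.1], by linarith [hq.2.2]⟩
  have hden : m.prod volume (ball2 (x, t) (2 * r)) ≤ 4 * C * b * c :=
    calc m.prod volume (ball2 (x, t) (2 * r))
        ≤ m.prod volume (ball x (2 * r) ×ˢ Ioo (t - 2 * r) (t + 2 * r)) :=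
          measure_mono (ball2_subset_ball_prod_Ioo x t (2 * r))
      _ = m (ball x (2 * r)) * (4 * c) := by
          rw [Measure.prod_prod, Real.volume_Ioo, show t + 2 * r - (t - 2 * r) = 4 * r by ring,
            ENNReal.ofReal_mul zero_le_four, ENNReal.ofReal_ofNat]
      _ ≤ C * b * (4 * c) := by gcongr
      _ = 4 * C * b * c := by ring
  calc ballDensity m S x r
      = 4 * C * ((a * c) / (4 * C * b * c)) := by
        rw [ENNReal.mul_div_mul_right _ _ hc0 ENNReal.ofReal_ne_top, ← mul_div_assoc,
          ENNReal.mul_div_mul_left _ _ h4C0 h4Ct, ballDensity]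
    _ ≤ 4 * C * ball2Density (m.prod volume) A (x, t) (2 * r) := by
        unfold ball2Density; gcongr

end Density

lemma tendsto_const_mul_nhdsGT_zero {c : ℝ} (hc : 0 < c) :
    Tendsto (fun r : ℝ => c * r) (𝓝[>] 0) (𝓝[>] 0) :=
  tendsto_nhdsWithin_of_tendsto_nhds_of_eventually_within _
    ((continuous_const_mul c).tendsto' 0 0 (mul_zero c) |>.mono_left nhdsWithin_le_nhds)
    (eventually_nhdsWithin_of_forall fun _ hr => mul_pos hc hr)

lemma ENNReal.tendsto_nhds_zero_of_limsup_eq_zero {α : Type*} {l : Filter α} {g : α → ℝ≥0∞}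
    (h : limsup g l = 0) : Tendsto g l (𝓝 0) :=
  tendsto_order.2 ⟨fun _ ha => absurd ha (ENNReal.not_lt_zero),
    fun _ hb => eventually_lt_of_limsup_lt (h ▸ hb)⟩

section Asymptotics

variable {X : Type*} [PseudoMetricSpace X] [MeasurableSpace X]
  (m : Measure X) {C : ℝ≥0∞} (hC0 : C ≠ 0) (hCt : C ≠ ⊤) {x : X}
  (hdbl : ∀ᶠ r in 𝓝[>] 0, m (ball x (2 * r)) ≤ C * m (ball x r))
include hC0 hCt hdbl

lemma tendsto_ball2Density_of_tendsto_ballDensity {t : ℝ} {A : Set (X × ℝ)} {S : Set X}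
    (hA : ∀ᶠ r in 𝓝[>] 0, A ∩ ball x r ×ˢ Ioo (t - r) (t + r) ⊆ Prod.fst ⁻¹' S)
    (hS : Tendsto (ballDensity m S x) (𝓝[>] 0) (𝓝 0)) :
    Tendsto (ball2Density (m.prod volume) A (x, t)) (𝓝[>] 0) (𝓝 0) := by
  have hdbl' : ∀ᶠ r in 𝓝[>] 0, m (ball x r) ≤ C * m (ball x (r / 2)) := by
    filter_upwards [(tendsto_const_mul_nhdsGT_zero (c := 2⁻¹) (by norm_num)).eventually hdbl]
      with r hr
    simpa [div_eq_inv_mul] using hr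
  have hS' : Tendsto (fun r => 2 * C * ballDensity m S x r) (𝓝[>] 0) (𝓝 0) := by
    simpa using ENNReal.Tendsto.const_mul hS (Or.inr (by finiteness))
  refine tendsto_of_tendsto_of_tendsto_of_le_of_le' tendsto_const_nhds hS'
    (Eventually.of_forall fun _ => zero_le) ?_
  filter_upwards [self_mem_nhdsWithin, hdbl', hA] with r hr hr_dbl hr_A
  exact ball2Density_le_of_subset m hC0 hCt hr hr_dbl hr_A

lemma tendsto_ballDensity_of_tendsto_ball2Density {t : ℝ} {A : Set (X × ℝ)} {S : Set X}
    (hA : ∀ᶠ r in 𝓝[>] 0, ∃ α ∈ Icc (t - r) t, (ball x r ∩ S) ×ˢ Ioo α (α + r) ⊆ A)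
    (h : Tendsto (ball2Density (m.prod volume) A (x, t)) (𝓝[>] 0) (𝓝 0)) :
    Tendsto (ballDensity m S x) (𝓝[>] 0) (𝓝 0) := by
  have h' : Tendsto (fun r => 4 * C * ball2Density (m.prod volume) A (x, t) (2 * r))
      (𝓝[>] 0) (𝓝 0) := by
    simpa using ENNReal.Tendsto.const_mul (h.comp (tendsto_const_mul_nhdsGT_zero two_pos))
      (Or.inr (by finiteness))
  refine tendsto_of_tendsto_of_tendsto_of_le_of_le' tendsto_const_nhds h'
    (Eventually.of_forall fun _ => zero_le) ?_
  filter_upwards [self_mem_nhdsWithin, hdbl, hA] with r hr hr_dbl ⟨α, hα, hr_A⟩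
  exact ballDensity_le_of_subset m hC0 hCt hr hα.1 hα.2 hr_dbl hr_A

end Asymptotics

section ApproximateLimits

variable {X : Type*} [PseudoMetricSpace X] [MeasurableSpace X] {m : Measure X} {f : X → ℝ}
  {x : X}

lemma exists_lt_tendsto_ballDensity_of_lt_apLowerLimit {t : EReal} (h : t < apLowerLimit m f x) :
    ∃ s : ℝ, t < s ∧ Tendsto (ballDensity m {y | f y < s} x) (𝓝[>] 0) (𝓝 0) := by
  obtain ⟨s', hs', hts'⟩ := lt_sSup_iff.1 h
  obtain ⟨s, hts, hss'⟩ := EReal.exists_between_coe_real hts'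
  refine ⟨s, hts, tendsto_of_tendsto_of_tendsto_of_le_of_le tendsto_const_nhds hs'
    (fun _ => zero_le) fun r => ballDensity_mono m (fun y hy => ?_) x r⟩
  exact (EReal.coe_lt_coe_iff.2 hy).trans hss'

lemma exists_lt_tendsto_ballDensity_of_apUpperLimit_lt {t : EReal} (h : apUpperLimit m f x < t) :
    ∃ s : ℝ, s < t ∧ Tendsto (ballDensity m {y | s < f y} x) (𝓝[>] 0) (𝓝 0) := by
  obtain ⟨s', hs', hs't⟩ := sInf_lt_iff.1 h
  obtain ⟨s, hs's, hst⟩ := EReal.exists_between_coe_real hs't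
  refine ⟨s, hst, tendsto_of_tendsto_of_tendsto_of_le_of_le tendsto_const_nhds hs'
    (fun _ => zero_le) fun r => ballDensity_mono m (fun y hy => ?_) x r⟩
  exact hs's.trans (EReal.coe_lt_coe_iff.2 hy)

lemma le_apLowerLimit_of_tendsto_ballDensity {s : ℝ}
    (h : Tendsto (ballDensity m {y | f y < s} x) (𝓝[>] 0) (𝓝 0)) :
    (s : EReal) ≤ apLowerLimit m f x :=
  le_sSup (show Tendsto (ballDensity m {y | (f y : EReal) < s} x) _ _ by
    simpa only [EReal.coe_lt_coe_iff] using h)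

lemma apUpperLimit_le_of_tendsto_ballDensity {s : ℝ}
    (h : Tendsto (ballDensity m {y | s < f y} x) (𝓝[>] 0) (𝓝 0)) :
    apUpperLimit m f x ≤ s :=
  sInf_le (show Tendsto (ballDensity m {y | (s : EReal) < f y} x) _ _ by
    simpa only [EReal.coe_lt_coe_iff] using h)

end ApproximateLimits

section Subgraph

variable {X : Type*} [PseudoMetricSpace X] [MeasurableSpace X] {m : Measure X} {C : ℝ≥0∞}
  (hC0 : C ≠ 0) (hCt : C ≠ ⊤) {f : X → ℝ} {x : X}
  (hdbl : ∀ᶠ r in 𝓝[>] 0, m (ball x (2 * r)) ≤ C * m (ball x r))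
include hC0 hCt hdbl

lemma tendsto_ball2Density_compl_subgraph_of_lt_apLowerLimit {t : ℝ}
    (h : (t : EReal) < apLowerLimit m f x) :
    Tendsto (ball2Density (m.prod volume) (subgraph f)ᶜ (x, t)) (𝓝[>] 0) (𝓝 0) := by
  obtain ⟨s, hts, hs⟩ := exists_lt_tendsto_ballDensity_of_lt_apLowerLimit h
  have hts : t < s := EReal.coe_lt_coe_iff.1 hts
  refine tendsto_ball2Density_of_tendsto_ballDensity m hC0 hCt hdbl ?_ hs
  filter_upwards [Ioo_mem_nhdsGT (sub_pos.2 hts)] with r hr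
  rintro ⟨y, u⟩ ⟨hyu, -, hu⟩
  have hfy : f y ≤ u := not_lt.1 hyu
  show f y < s
  linarith [hu.2, hr.2]

lemma tendsto_ball2Density_subgraph_of_apUpperLimit_lt {t : ℝ}
    (h : apUpperLimit m f x < t) :
    Tendsto (ball2Density (m.prod volume) (subgraph f) (x, t)) (𝓝[>] 0) (𝓝 0) := by
  obtain ⟨s, hst, hs⟩ := exists_lt_tendsto_ballDensity_of_apUpperLimit_lt h
  have hst : s < t := EReal.coe_lt_coe_iff.1 hst
  refine tendsto_ball2Density_of_tendsto_ballDensity m hC0 hCt hdbl ?_ hs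
  filter_upwards [Ioo_mem_nhdsGT (sub_pos.2 hst)] with r hr
  rintro ⟨y, u⟩ ⟨hyu : u < f y, -, hu⟩
  show s < f y
  linarith [hu.1, hr.2]

lemma apUpperLimit_le_of_tendsto_ball2Density_subgraph {t : ℝ}
    (h : Tendsto (ball2Density (m.prod volume) (subgraph f) (x, t)) (𝓝[>] 0) (𝓝 0)) :
    apUpperLimit m f x ≤ t := by
  refine EReal.le_of_forall_lt_iff_le.1 fun s hts => apUpperLimit_le_of_tendsto_ballDensity ?_
  have hts : t < s := EReal.coe_lt_coe_iff.1 hts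
  refine tendsto_ballDensity_of_tendsto_ball2Density m hC0 hCt hdbl ?_ h
  filter_upwards [Ioo_mem_nhdsGT (sub_pos.2 hts)] with r hr
  refine ⟨t, ⟨by linarith [hr.1], le_rfl⟩, ?_⟩
  rintro ⟨y, u⟩ ⟨⟨-, hy : s < f y⟩, hu⟩
  show u < f y
  linarith [hu.2, hr.2]

lemma le_apLowerLimit_of_tendsto_ball2Density_compl_subgraph {t : ℝ}
    (h : Tendsto (ball2Density (m.prod volume) (subgraph f)ᶜ (x, t)) (𝓝[>] 0) (𝓝 0)) :
    (t : EReal) ≤ apLowerLimit m f x := by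
  refine EReal.ge_of_forall_gt_iff_ge.1 fun s hst => le_apLowerLimit_of_tendsto_ballDensity ?_
  have hst : s < t := EReal.coe_lt_coe_iff.1 hst
  refine tendsto_ballDensity_of_tendsto_ball2Density m hC0 hCt hdbl ?_ h
  filter_upwards [Ioo_mem_nhdsGT (sub_pos.2 hst)] with r hr
  refine ⟨t - r, ⟨le_rfl, by linarith [hr.1]⟩, ?_⟩
  rintro ⟨y, u⟩ ⟨⟨-, hy : f y < s⟩, hu⟩
  show ¬ u < f y
  linarith [hu.1, hr.2]

lemma apLowerLimit_le_and_le_apUpperLimit_of_mem_essBoundary2 {t : ℝ}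
    (h : (x, t) ∈ essBoundary2 (m.prod volume) (subgraph f)) :
    apLowerLimit m f x ≤ t ∧ t ≤ apUpperLimit m f x := by
  rw [mem_essBoundary2_iff] at h
  constructor
  · by_contra! ht
    exact h.2.ne' (tendsto_ball2Density_compl_subgraph_of_lt_apLowerLimit hC0 hCt hdbl ht).limsup_eq
  · by_contra! ht
    exact h.1.ne' (tendsto_ball2Density_subgraph_of_apUpperLimit_lt hC0 hCt hdbl ht).limsup_eq

lemma mem_essBoundary2_subgraph_of_lt_of_lt {t : ℝ} (hl : apLowerLimit m f x < t)
    (hu : t < apUpperLimit m f x) : (x, t) ∈ essBoundary2 (m.prod volume) (subgraph f) := by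
  rw [mem_essBoundary2_iff]
  constructor
  · refine pos_iff_ne_zero.2 fun h => hu.not_ge ?_
    exact apUpperLimit_le_of_tendsto_ball2Density_subgraph hC0 hCt hdbl
      (ENNReal.tendsto_nhds_zero_of_limsup_eq_zero h)
  · refine pos_iff_ne_zero.2 fun h => hl.not_ge ?_
    exact le_apLowerLimit_of_tendsto_ball2Density_compl_subgraph hC0 hCt hdbl
      (ENNReal.tendsto_nhds_zero_of_limsup_eq_zero h)

end Subgraph

theorem statement0_general
    {X : Type*} [MetricSpace X]
    [MeasurableSpace X]
    (m : Measure X)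
    (hdbl : ∀ R : ℝ, 0 < R → ∃ C : ℝ≥0∞, 0 < C ∧ C < ⊤ ∧
      ∀ (x : X) (r : ℝ), 0 < r → r < R →
        m (Metric.ball x (2 * r)) ≤ C * m (Metric.ball x r))
    (f : X → ℝ) :
    (∀ (x : X) (t : ℝ), (x, t) ∈ essBoundary2 (m.prod volume) (subgraph f) →
        apLowerLimit m f x ≤ (t : EReal) ∧ (t : EReal) ≤ apUpperLimit m f x) ∧
    (∀ (x : X) (t : ℝ), apLowerLimit m f x < (t : EReal) → (t : EReal) < apUpperLimit m f x →
        (x, t) ∈ essBoundary2 (m.prod volume) (subgraph f)) ∧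
    (∀ x : X, ⊥ < apLowerLimit m f x → apLowerLimit m f x = apUpperLimit m f x →
        apUpperLimit m f x < ⊤ →
        ∀ t : ℝ, (x, t) ∈ essBoundary2 (m.prod volume) (subgraph f) →
          (t : EReal) = (apLowerLimit m f x + apUpperLimit m f x) / 2) := by
  obtain ⟨C, hC0, hCt, hC⟩ := hdbl 1 one_pos
  have hdbl_at (x : X) : ∀ᶠ r in 𝓝[>] 0, m (ball x (2 * r)) ≤ C * m (ball x r) := by
    filter_upwards [Ioo_mem_nhdsGT one_pos] with r hr using hC x r hr.1 hr.2
  have bounds (x : X) (t : ℝ) (h : (x, t) ∈ essBoundary2 (m.prod volume) (subgraph f)) :=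
    apLowerLimit_le_and_le_apUpperLimit_of_mem_essBoundary2 hC0.ne' hCt.ne (hdbl_at x) h
  refine ⟨bounds, fun x t =>
    mem_essBoundary2_subgraph_of_lt_of_lt hC0.ne' hCt.ne (hdbl_at x), ?_⟩
  intro x _ heq _ t ht
  obtain ⟨hl, hu⟩ := bounds x t ht
  have hlt : apLowerLimit m f x = t := le_antisymm hl (heq ▸ hu)
  rw [← heq, hlt, ← EReal.coe_add, show (2 : EReal) = (2 : ℝ) from rfl, ← EReal.coe_div,
    add_self_div_two]

/-- Let `(X,d,m)` be a uniformly locally doubling metric measure space and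
`f : X → ℝ` a Borel function. Endow `X × ℝ` with the ℓ² product distance and the measure
`m ⊗ L¹`, and let `G_f` be the subgraph of `f`. Then:
(i) if `(x,t) ∈ ∂*G_f` then `f^∧(x) ≤ t ≤ f^∨(x)`;
(ii) if `f^∧(x) < t < f^∨(x)` then `(x,t) ∈ ∂*G_f`;
(iii) if `−∞ < f^∧(x) = f^∨(x) < +∞` then `∂*G_f ∩ ({x} × ℝ) ⊆ {(x, f̄(x))}` where
`f̄(x) = (f^∧(x)+f^∨(x))/2`. -/
theorem statement0
    {X : Type*} [MetricSpace X] [CompleteSpace X] [TopologicalSpace.SeparableSpace X]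
    [MeasurableSpace X] [BorelSpace X]
    (m : Measure X)
    (hbf : ∀ s : Set X, Bornology.IsBounded s → m s < ⊤)
    (hdbl : ∀ R : ℝ, 0 < R → ∃ C : ℝ≥0∞, 0 < C ∧ C < ⊤ ∧
      ∀ (x : X) (r : ℝ), 0 < r → r < R →
        m (Metric.ball x (2 * r)) ≤ C * m (Metric.ball x r))
    (f : X → ℝ) (hf : Measurable f) :
    (∀ (x : X) (t : ℝ), (x, t) ∈ essBoundary2 (m.prod volume) (subgraph f) →
        apLowerLimit m f x ≤ (t : EReal) ∧ (t : EReal) ≤ apUpperLimit m f x) ∧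
    (∀ (x : X) (t : ℝ), apLowerLimit m f x < (t : EReal) → (t : EReal) < apUpperLimit m f x →
        (x, t) ∈ essBoundary2 (m.prod volume) (subgraph f)) ∧
    (∀ x : X, ⊥ < apLowerLimit m f x → apLowerLimit m f x = apUpperLimit m f x →
        apUpperLimit m f x < ⊤ →
        ∀ t : ℝ, (x, t) ∈ essBoundary2 (m.prod volume) (subgraph f) →
          (t : EReal) = (apLowerLimit m f x + apUpperLimit m f x) / 2) :=
  statement0_general m hdbl f

end
end

section
/- Let (X,d,m) be a uniformly locally doubling metric measure space, and endow X×ℝ with the distance d̃((x,t),(y,s)) = sqrt(d(x,y)² + (t−s)²) and the measure m⊗L¹. There exists a constant C > 0, depending only on the doubling constants of m at scales at most 1, such that for every Borel function f: X→ℝ, every point (x,t) ∈ X×ℝ with m(B_r(x)) > 0 for all r > 0, every ε ∈ (0,1) and every r ∈ (0,ε): (m⊗L¹)(B_r((x,t)) ∩ G_f) / (m⊗L¹)(B_r((x,t))) ≤ C · m(B_r(x)∩{f > t−ε}) / m(B_r(x)), and (m⊗L¹)(B_r((x,t)) ∖ G_f) / (m⊗L¹)(B_r((x,t))) ≤ C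 · m(B_r(x)∩{f < t+ε}) / m(B_r(x)), where G_f = {(y,s) ∈ X×ℝ : s < f(y)} is the subgraph of f and the balls B_r((x,t)) are taken with respect to d̃. -/
open MeasureTheory Filter Set Metric Topology
open scoped ENNReal NNReal

noncomputable section

lemma dist_fst_le_dist2 {X : Type*} [PseudoMetricSpace X] (p q : X × ℝ) :
    dist p.1 q.1 ≤ dist2 p q := by
  rw [show dist p.1 q.1 = Real.sqrt (dist p.1 q.1 ^ 2) by
    rw [Real.sqrt_sq dist_nonneg]]
  exact Real.sqrt_le_sqrt (le_add_of_nonneg_right (sq_nonneg _))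

lemma abs_snd_le_dist2 {X : Type*} [PseudoMetricSpace X] (p q : X × ℝ) :
    |p.2 - q.2| ≤ dist2 p q := by
  rw [← Real.sqrt_sq_eq_abs]
  exact Real.sqrt_le_sqrt (le_add_of_nonneg_left (sq_nonneg _))

/-- Arithmetic core: from an upper bound on the numerator and a lower bound on the
denominator, deduce the ratio bound. -/
lemma ratio_bound (CD A B N D r0 : ℝ≥0∞) (hCD0 : CD ≠ 0) (hCDtop : CD ≠ ⊤)
    (hD0 : D ≠ 0) (hDtop : D ≠ ⊤) (hB0 : B ≠ 0) (hBtop : B ≠ ⊤)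
    (hA : A ≤ N * (2 * r0)) (hB : CD⁻¹ * D * r0 ≤ B) :
    A / B ≤ (2 * CD) * (N / D) := by
  rw [ENNReal.div_le_iff hB0 hBtop]
  calc A ≤ N * (2 * r0) := hA
    _ = (CD * CD⁻¹) * ((D⁻¹ * D) * (N * (2 * r0))) := by
        rw [ENNReal.mul_inv_cancel hCD0 hCDtop, ENNReal.inv_mul_cancel hD0 hDtop,
          one_mul, one_mul]
    _ = (2 * CD * (N * D⁻¹)) * (CD⁻¹ * D * r0) := by ring
    _ ≤ (2 * CD * (N / D)) * B := by
        rw [div_eq_mul_inv]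
        exact mul_le_mul_right hB _

/-- There is a constant `C > 0`, depending only on the doubling constant
`CD` of `m` at scales at most `1`, such that for every Borel `f : X → ℝ`, every `(x,t)` with
`m(B_r(x)) > 0` for all `r > 0`, every `ε ∈ (0,1)` and every `r ∈ (0,ε)`, the density ratios of
the subgraph `G_f` (for the ℓ² distance and the measure `m ⊗ L¹` on `X × ℝ`) are controlled:
`(m⊗L¹)(B_r((x,t)) ∩ G_f)/(m⊗L¹)(B_r((x,t))) ≤ C · m(B_r(x)∩{f > t−ε})/m(B_r(x))` and
`(m⊗L¹)(B_r((x,t)) ∖ G_f)/(m⊗L¹)(B_r((x,t))) ≤ C · m(B_r(x)∩{f < t+ε})/m(B_r(x))`. -/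
theorem statement1 (CD : ℝ≥0∞) (hCD : 0 < CD) (hCDfin : CD < ⊤) :
    ∃ C : ℝ≥0∞, 0 < C ∧ C < ⊤ ∧
      ∀ (X : Type) (_ : MetricSpace X) (_ : CompleteSpace X)
        (_ : TopologicalSpace.SeparableSpace X)
        (_ : MeasurableSpace X) (_ : BorelSpace X) (m : Measure X),
        (∀ s : Set X, Bornology.IsBounded s → m s < ⊤) →
        (∀ (x : X) (r : ℝ), 0 < r → r ≤ 1 →
            m (Metric.ball x (2 * r)) ≤ CD * m (Metric.ball x r)) →
        ∀ f : X → ℝ, Measurable f →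
        ∀ (x : X) (t : ℝ), (∀ r : ℝ, 0 < r → 0 < m (Metric.ball x r)) →
        ∀ ε : ℝ, 0 < ε → ε < 1 → ∀ r : ℝ, 0 < r → r < ε →
          (m.prod volume) (ball2 (x, t) r ∩ subgraph f) / (m.prod volume) (ball2 (x, t) r) ≤
              C * (m (Metric.ball x r ∩ {y | t - ε < f y}) / m (Metric.ball x r)) ∧
          (m.prod volume) (ball2 (x, t) r \ subgraph f) / (m.prod volume) (ball2 (x, t) r) ≤
              C * (m (Metric.ball x r ∩ {y | f y < t + ε}) / m (Metric.ball x r)) := by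
  have hCD0 : CD ≠ 0 := hCD.ne'
  have hCDtop : CD ≠ ⊤ := hCDfin.ne
  refine ⟨2 * CD, ENNReal.mul_pos (by norm_num) hCD0, ENNReal.mul_lt_top (by norm_num) hCDfin, ?_⟩
  intro X _ _ _ _ _ m hfin hdbl f hf x t hpos ε hε hε1 r hr hrε
  have hr1 : r < 1 := hrε.trans hε1
  -- the small product set is contained in the ℓ² ball
  have hsub2 : Metric.ball x (r/2) ×ˢ Ioo (t - r/2) (t + r/2) ⊆ ball2 (x, t) r := by
    rintro ⟨y, s⟩ ⟨hy, hs⟩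
    simp only [Metric.mem_ball, Set.mem_Ioo] at hy hs
    show dist2 (x, t) (y, s) < r
    rw [dist2, Real.sqrt_lt' hr]
    have h1 : dist x y < r/2 := by rwa [dist_comm]
    have h2 : |t - s| < r/2 := abs_lt.2 ⟨by linarith [hs.2], by linarith [hs.1]⟩
    have hd : (0:ℝ) ≤ dist x y := dist_nonneg
    have ha : (0:ℝ) ≤ |t - s| := abs_nonneg _
    have := sq_abs (t - s)
    nlinarith [sq_abs (t - s)]
  -- the ℓ² ball is contained in the big product set
  have hsub1 : ball2 (x, t) r ⊆ Metric.ball x r ×ˢ Ioo (t - r) (t + r) := by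
    rintro ⟨y, s⟩ hp
    have hp' : dist2 (x, t) (y, s) < r := hp
    have h1 : dist x y < r := lt_of_le_of_lt (dist_fst_le_dist2 (x, t) (y, s)) hp'
    have h2 : |t - s| < r := lt_of_le_of_lt (abs_snd_le_dist2 (x, t) (y, s)) hp'
    rw [abs_lt] at h2
    exact ⟨by rwa [Metric.mem_ball, dist_comm], by constructor <;> [linarith [h2.1]; linarith [h2.2]]⟩
  have hIoo : volume (Ioo (t - r) (t + r)) = ENNReal.ofReal (2 * r) := by
    rw [Real.volume_Ioo]; congr 1; ring
  have hIoo2 : volume (Ioo (t - r/2) (t + r/2)) = ENNReal.ofReal r := by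
    rw [Real.volume_Ioo]; congr 1; ring
  set B := (m.prod volume) (ball2 (x, t) r) with hBdef
  set D := m (Metric.ball x r) with hDdef
  -- denominator facts
  have hD0 : D ≠ 0 := (hpos r hr).ne'
  have hDtop : D ≠ ⊤ := (hfin _ Metric.isBounded_ball).ne
  have hBlow' : m (Metric.ball x (r/2)) * ENNReal.ofReal r ≤ B := by
    calc m (Metric.ball x (r/2)) * ENNReal.ofReal r
        = (m.prod volume) (Metric.ball x (r/2) ×ˢ Ioo (t - r/2) (t + r/2)) := by
          rw [Measure.prod_prod, hIoo2]
      _ ≤ B := measure_mono hsub2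
  have hB0 : B ≠ 0 := by
    intro h
    have := hBlow'.trans_eq h
    simp only [le_zero_iff, mul_eq_zero] at this
    rcases this with h' | h'
    · exact (hpos (r/2) (by linarith)).ne' h'
    · exact (ENNReal.ofReal_pos.2 hr).ne' h'
  have hBtop : B ≠ ⊤ := by
    have : B ≤ D * ENNReal.ofReal (2 * r) := by
      calc B ≤ (m.prod volume) (Metric.ball x r ×ˢ Ioo (t - r) (t + r)) := measure_mono hsub1
        _ = D * ENNReal.ofReal (2 * r) := by rw [Measure.prod_prod, hIoo]
    exact (this.trans_lt (ENNReal.mul_lt_top (hfin _ Metric.isBounded_ball) ENNReal.ofReal_lt_top)).ne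
  -- doubling: CD⁻¹ * D * r ≤ B
  have hdb : D ≤ CD * m (Metric.ball x (r/2)) := by
    have := hdbl x (r/2) (by linarith) (by linarith)
    rwa [show 2 * (r/2) = r by ring] at this
  have hBlow : CD⁻¹ * D * ENNReal.ofReal r ≤ B := by
    refine le_trans (mul_le_mul_left ?_ _) hBlow'
    calc CD⁻¹ * D ≤ CD⁻¹ * (CD * m (Metric.ball x (r/2))) := mul_le_mul_right hdb _
      _ = m (Metric.ball x (r/2)) := by
          rw [← mul_assoc, ENNReal.inv_mul_cancel hCD0 hCDtop, one_mul]
  have hofr : ENNReal.ofReal (2 * r) = 2 * ENNReal.ofReal r := by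
    rw [ENNReal.ofReal_mul (by norm_num)]; norm_num
  constructor
  · -- subgraph part
    have hA : (m.prod volume) (ball2 (x, t) r ∩ subgraph f) ≤
        m (Metric.ball x r ∩ {y | t - ε < f y}) * (2 * ENNReal.ofReal r) := by
      rw [← hofr]
      calc (m.prod volume) (ball2 (x, t) r ∩ subgraph f)
          ≤ (m.prod volume) ((Metric.ball x r ∩ {y | t - ε < f y}) ×ˢ Ioo (t - r) (t + r)) := by
            apply measure_mono
            rintro ⟨y, s⟩ ⟨h1, h2⟩
            obtain ⟨hy, hs⟩ := hsub1 h1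
            simp only [subgraph, Set.mem_setOf_eq] at h2
            simp only [Set.mem_Ioo] at hs
            exact ⟨⟨hy, show t - ε < f y by linarith [hs.1]⟩, hs⟩
        _ = m (Metric.ball x r ∩ {y | t - ε < f y}) * ENNReal.ofReal (2 * r) := by
            rw [Measure.prod_prod, hIoo]
    exact ratio_bound CD _ B _ D (ENNReal.ofReal r) hCD0 hCDtop hD0 hDtop hB0 hBtop hA hBlow
  · -- complement part
    have hA : (m.prod volume) (ball2 (x, t) r \ subgraph f) ≤
        m (Metric.ball x r ∩ {y | f y < t + ε}) * (2 * ENNReal.ofReal r) := by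
      rw [← hofr]
      calc (m.prod volume) (ball2 (x, t) r \ subgraph f)
          ≤ (m.prod volume) ((Metric.ball x r ∩ {y | f y < t + ε}) ×ˢ Ioo (t - r) (t + r)) := by
            apply measure_mono
            rintro ⟨y, s⟩ ⟨h1, h2⟩
            obtain ⟨hy, hs⟩ := hsub1 h1
            simp only [subgraph, Set.mem_setOf_eq, not_lt] at h2
            simp only [Set.mem_Ioo] at hs
            exact ⟨⟨hy, by
              show f y < t + ε
              linarith [hs.2]⟩, hs⟩
        _ = m (Metric.ball x r ∩ {y | f y < t + ε}) * ENNReal.ofReal (2 * r) := by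
            rw [Measure.prod_prod, hIoo]
    exact ratio_bound CD _ B _ D (ENNReal.ofReal r) hCD0 hCDtop hD0 hDtop hB0 hBtop hA hBlow
end
end

section
/- Let (X,d,m) be a uniformly locally doubling metric measure space, and endow X×ℝ with the distance d̃((x,t),(y,s)) = sqrt(d(x,y)² + (t−s)²) and the measure m⊗L¹. There exists a constant c > 0, depending only on the doubling constants of m at scales at most 1, such that for every Borel function f: X→ℝ, every point (x,t) ∈ X×ℝ with m(B_r(x)) > 0 for all r > 0, every ε ∈ (0,1) and every r ∈ (0,ε): (m⊗L¹)(B_{2r}((x,t)) ∩ G_f) / (m⊗L¹)(B_{2r}((x,t))) ≥ c · m(B_r(x)∩{f > t+ε}) / m(B_r(x)), and (m⊗L¹)(B_{2r}((x,t)) ∖ G_f) / (m⊗L¹)(B_{2r}((x,t))) ≥ c · m(B_r(x)∩{f < t−ε}) / m(B_r(x)), where G_f = {(y,s) ∈ X×ℝ : s < f(y)} is the subgraph of f and the balls are taken with respect to d̃. -/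
open MeasureTheory Filter Set Metric Topology
open scoped ENNReal NNReal

noncomputable section

lemma aux_div (CD a b R D N : ℝ≥0∞) (hCDT : CD ≠ ⊤)
    (hbT : b ≠ ⊤) (hR0 : R ≠ 0) (hRT : R ≠ ⊤)
    (hN : a * R ≤ N) (hD : D ≤ CD * b * (2 * R)) :
    (2 * CD)⁻¹ * (a / b) ≤ N / D := by
  have hkey : (2 * CD * b)⁻¹ = (2 * CD)⁻¹ * b⁻¹ :=
    ENNReal.mul_inv (Or.inr hbT)
      (Or.inl (ENNReal.mul_ne_top (by norm_num) hCDT))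
  have h1 : (2 * CD)⁻¹ * (a / b) = (R * a) / (R * (2 * CD * b)) := by
    rw [ENNReal.mul_div_mul_left _ _ hR0 hRT, div_eq_mul_inv, div_eq_mul_inv, hkey]
    ring
  rw [h1]
  exact ENNReal.div_le_div (by rwa [mul_comm]) (hD.trans_eq (by ring))

/-- There is a constant `c > 0`, depending only on the doubling constant
`CD` of `m` at scales at most `1`, such that for every Borel `f : X → ℝ`, every `(x,t)` with
`m(B_r(x)) > 0` for all `r > 0`, every `ε ∈ (0,1)` and every `r ∈ (0,ε)`:
`(m⊗L¹)(B_{2r}((x,t)) ∩ G_f)/(m⊗L¹)(B_{2r}((x,t))) ≥ c · m(B_r(x)∩{f > t+ε})/m(B_r(x))` and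
`(m⊗L¹)(B_{2r}((x,t)) ∖ G_f)/(m⊗L¹)(B_{2r}((x,t))) ≥ c · m(B_r(x)∩{f < t−ε})/m(B_r(x))`,
where `G_f` is the subgraph of `f`, and the balls on `X × ℝ` are taken with respect to the
ℓ² product distance. -/
theorem statement2 (CD : ℝ≥0∞) (hCD : 0 < CD) (hCDfin : CD < ⊤) :
    ∃ c : ℝ≥0∞, 0 < c ∧ c < ⊤ ∧
      ∀ (X : Type) (_ : MetricSpace X) (_ : CompleteSpace X)
        (_ : TopologicalSpace.SeparableSpace X)
        (_ : MeasurableSpace X) (_ : BorelSpace X) (m : Measure X),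
        (∀ s : Set X, Bornology.IsBounded s → m s < ⊤) →
        (∀ (x : X) (r : ℝ), 0 < r → r ≤ 1 →
            m (Metric.ball x (2 * r)) ≤ CD * m (Metric.ball x r)) →
        ∀ f : X → ℝ, Measurable f →
        ∀ (x : X) (t : ℝ), (∀ r : ℝ, 0 < r → 0 < m (Metric.ball x r)) →
        ∀ ε : ℝ, 0 < ε → ε < 1 → ∀ r : ℝ, 0 < r → r < ε →
          c * (m (Metric.ball x r ∩ {y | t + ε < f y}) / m (Metric.ball x r)) ≤
              (m.prod volume) (ball2 (x, t) (2 * r) ∩ subgraph f) /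
                (m.prod volume) (ball2 (x, t) (2 * r)) ∧
          c * (m (Metric.ball x r ∩ {y | f y < t - ε}) / m (Metric.ball x r)) ≤
              (m.prod volume) (ball2 (x, t) (2 * r) \ subgraph f) /
                (m.prod volume) (ball2 (x, t) (2 * r)) := by
  refine ⟨(2 * CD)⁻¹, ?_, ?_, ?_⟩
  · exact ENNReal.inv_pos.2 (ENNReal.mul_ne_top (by norm_num) hCDfin.ne)
  · exact ENNReal.inv_lt_top.2 (ENNReal.mul_pos (by norm_num) hCD.ne')
  intro X _ _ _ _ _ m hfin hdoub f hf x t hpos ε hε hε1 r hr hrε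
  have hr1 : r ≤ 1 := le_of_lt (hrε.trans hε1)
  set b := m (Metric.ball x r) with hb
  have hbT : b ≠ ⊤ := (hfin _ isBounded_ball).ne
  set R := ENNReal.ofReal (2 * r) with hR
  have hR0 : R ≠ 0 := (ENNReal.ofReal_pos.2 (by linarith)).ne'
  have hRT : R ≠ ⊤ := ENNReal.ofReal_ne_top
  -- denominator bound
  have hsub : ball2 (x, t) (2 * r) ⊆ Metric.ball x (2 * r) ×ˢ Ioo (t - 2 * r) (t + 2 * r) := by
    rintro ⟨y, s⟩ h
    have h' : Real.sqrt (dist x y ^ 2 + (t - s) ^ 2) < 2 * r := h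
    have hd : dist x y < 2 * r := by
      calc dist x y = Real.sqrt (dist x y ^ 2) := (Real.sqrt_sq dist_nonneg).symm
        _ ≤ Real.sqrt (dist x y ^ 2 + (t - s) ^ 2) :=
            Real.sqrt_le_sqrt (by nlinarith [sq_nonneg (t - s)])
        _ < 2 * r := h'
    have hs : |t - s| < 2 * r := by
      calc |t - s| = Real.sqrt ((t - s) ^ 2) := (Real.sqrt_sq_eq_abs _).symm
        _ ≤ Real.sqrt (dist x y ^ 2 + (t - s) ^ 2) :=
            Real.sqrt_le_sqrt (by nlinarith [sq_nonneg (dist x y)])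
        _ < 2 * r := h'
    rw [abs_lt] at hs
    exact ⟨by rw [Metric.mem_ball, dist_comm]; exact hd, by constructor <;> linarith [hs.1, hs.2]⟩
  have hD : (m.prod volume) (ball2 (x, t) (2 * r)) ≤ CD * b * (2 * R) := by
    calc (m.prod volume) (ball2 (x, t) (2 * r))
        ≤ (m.prod volume) (Metric.ball x (2 * r) ×ˢ Ioo (t - 2 * r) (t + 2 * r)) :=
          measure_mono hsub
      _ = m (Metric.ball x (2 * r)) * ENNReal.ofReal (t + 2 * r - (t - 2 * r)) := by
          rw [Measure.prod_prod, Real.volume_Ioo]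
      _ ≤ (CD * b) * (2 * R) := by
          refine mul_le_mul' (hdoub x r hr hr1) ?_
          rw [hR, ← ENNReal.ofReal_ofNat 2, ← ENNReal.ofReal_mul (by norm_num)]
          exact ENNReal.ofReal_le_ofReal (le_of_eq (by ring))
  -- membership of the small product box in ball2
  have hbox : ∀ y s, y ∈ Metric.ball x r → s ∈ Ioo (t - r) (t + r) →
      (y, s) ∈ ball2 (x, t) (2 * r) := by
    intro y s hy hs
    have hy' : dist x y < r := by rwa [Metric.mem_ball, dist_comm] at hy
    show Real.sqrt (dist x y ^ 2 + (t - s) ^ 2) < 2 * r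
    rw [show (2 : ℝ) * r = Real.sqrt ((2 * r) ^ 2) from (Real.sqrt_sq (by linarith)).symm]
    refine Real.sqrt_lt_sqrt (by positivity) ?_
    have h1 : |t - s| < r := by rw [abs_lt]; constructor <;> [linarith [hs.2]; linarith [hs.1]]
    nlinarith [abs_nonneg (t - s), sq_abs (t - s), dist_nonneg (x := x) (y := y)]
  constructor
  · -- subgraph part
    have hN : m (Metric.ball x r ∩ {y | t + ε < f y}) * R ≤
        (m.prod volume) (ball2 (x, t) (2 * r) ∩ subgraph f) := by
      have hincl : (Metric.ball x r ∩ {y | t + ε < f y}) ×ˢ Ioo (t - r) (t + r) ⊆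
          ball2 (x, t) (2 * r) ∩ subgraph f := by
        rintro ⟨y, s⟩ ⟨⟨hy1, hy2⟩, hs⟩
        refine ⟨hbox y s hy1 hs, ?_⟩
        show s < f y
        have := hs.2
        simp only [mem_setOf_eq] at hy2
        linarith
      calc m (Metric.ball x r ∩ {y | t + ε < f y}) * R
          = (m.prod volume) ((Metric.ball x r ∩ {y | t + ε < f y}) ×ˢ Ioo (t - r) (t + r)) := by
            rw [Measure.prod_prod, Real.volume_Ioo, hR]; congr 1; ring_nf
        _ ≤ _ := measure_mono hincl
    exact aux_div CD _ b R _ _ hCDfin.ne hbT hR0 hRT hN hD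
  · -- complement part
    have hN : m (Metric.ball x r ∩ {y | f y < t - ε}) * R ≤
        (m.prod volume) (ball2 (x, t) (2 * r) \ subgraph f) := by
      have hincl : (Metric.ball x r ∩ {y | f y < t - ε}) ×ˢ Ioo (t - r) (t + r) ⊆
          ball2 (x, t) (2 * r) \ subgraph f := by
        rintro ⟨y, s⟩ ⟨⟨hy1, hy2⟩, hs⟩
        refine ⟨hbox y s hy1 hs, ?_⟩
        show ¬ s < f y
        have := hs.1
        simp only [mem_setOf_eq] at hy2
        push_neg
        linarith
      calc m (Metric.ball x r ∩ {y | f y < t - ε}) * R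
          = (m.prod volume) ((Metric.ball x r ∩ {y | f y < t - ε}) ×ˢ Ioo (t - r) (t + r)) := by
            rw [Measure.prod_prod, Real.volume_Ioo, hR]; congr 1; ring_nf
        _ ≤ _ := measure_mono hincl
    exact aux_div CD _ b R _ _ hCDfin.ne hbT hR0 hRT hN hD


end
end

section
/- Let (X,d) be a metric space, m a Borel measure on X, and n ≥ 1 an integer. Let x ∈ X, let (x_i) be a sequence in X and (s_i) ⊆ (0,∞) with s_i → 0, and let C > 0, α > 0, r̄ > 0 be such that 0 < m(B_r(x)) < ∞ and 0 < m(B_r(x_i)) < ∞ for every i and every r ∈ (0,r̄), and such that |m(B_r(x))/m(B_r(x_i)) − 1| ≤ C·s_i^α and |m(B_r(x_i))/m(B_r(x)) − 1| ≤ C·s_i^α for every i and every r ∈ (0,r̄). Assume that for every i the n-dimensional density Θ_n(m,x_i) exists and belongs to (0,∞). Then Θ_n(m,x) exists, belongs to (0,∞), and equals lim_{i→∞} Θ_n(m,x_i). -/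
open MeasureTheory Filter Set Metric Topology
open scoped ENNReal NNReal

noncomputable section

/-- `ω_k = π^{k/2} / Γ(1 + k/2)`, the volume of the unit ball of `ℝ^k` for integer `k`. -/
def omegaN (k : ℕ) : ℝ := Real.pi ^ ((k : ℝ) / 2) / Real.Gamma ((k : ℝ) / 2 + 1)

/-- The quotient `m(B_r(x)) / (ω_n rⁿ)` whose limit as `r → 0⁺` (when it exists) is the
`n`-dimensional density of `m` at `x`. -/
def densityRatio {X : Type*} [PseudoMetricSpace X] [MeasurableSpace X]
    (m : Measure X) (n : ℕ) (x : X) (r : ℝ) : ℝ≥0∞ :=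
  m (Metric.ball x r) / ENNReal.ofReal (omegaN n * r ^ n)

/-- The `n`-dimensional density `Θ_n(m,x)` exists and equals `θ`. -/
def HasDensity {X : Type*} [PseudoMetricSpace X] [MeasurableSpace X]
    (m : Measure X) (n : ℕ) (x : X) (θ : ℝ≥0∞) : Prop :=
  Tendsto (fun r : ℝ => densityRatio m n x r) (𝓝[>] (0 : ℝ)) (𝓝 θ)

lemma aux_ofReal_le {A B : ℝ≥0∞} {ε : ℝ} (hε : 0 ≤ ε) (hA : A ≠ ⊤) (hB : B ≠ ⊤) (hB0 : B ≠ 0)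
    (h : A.toReal / B.toReal - 1 ≤ ε) : A ≤ ENNReal.ofReal (1 + ε) * B := by
  have hBpos : 0 < B.toReal := ENNReal.toReal_pos hB0 hB
  have h1 : A.toReal ≤ (1 + ε) * B.toReal := by
    have := (div_le_iff₀ hBpos).mp (by linarith : A.toReal / B.toReal ≤ 1 + ε)
    linarith
  calc A = ENNReal.ofReal A.toReal := (ENNReal.ofReal_toReal hA).symm
    _ ≤ ENNReal.ofReal ((1 + ε) * B.toReal) := ENNReal.ofReal_le_ofReal h1
    _ = ENNReal.ofReal (1 + ε) * B := by
        rw [ENNReal.ofReal_mul (by linarith), ENNReal.ofReal_toReal hB]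

/-- If `x_i → x` in the sense that the volume ratios
`m(B_r(x))/m(B_r(x_i))` are uniformly close to `1` (with error `C·s_i^α`, `s_i → 0`) for all
radii `r ∈ (0, r̄)`, and the `n`-density `Θ_n(m,x_i)` exists and lies in `(0,∞)` for every
`i`, then `Θ_n(m,x)` exists, lies in `(0,∞)`, and equals `lim_i Θ_n(m,x_i)`. -/
theorem statement4
    {X : Type*} [MetricSpace X] [MeasurableSpace X]
    (m : Measure X) (n : ℕ) (hn : 1 ≤ n)
    (x : X) (xi : ℕ → X) (s : ℕ → ℝ)
    (hs_pos : ∀ i, 0 < s i) (hs_lim : Tendsto s atTop (𝓝 0))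
    (C α rbar : ℝ) (hC : 0 < C) (hα : 0 < α) (hrbar : 0 < rbar)
    (hx_fin : ∀ r : ℝ, 0 < r → r < rbar →
      0 < m (Metric.ball x r) ∧ m (Metric.ball x r) < ⊤)
    (hxi_fin : ∀ i, ∀ r : ℝ, 0 < r → r < rbar →
      0 < m (Metric.ball (xi i) r) ∧ m (Metric.ball (xi i) r) < ⊤)
    (hratio₁ : ∀ i, ∀ r : ℝ, 0 < r → r < rbar →
      |(m (Metric.ball x r)).toReal / (m (Metric.ball (xi i) r)).toReal - 1| ≤ C * s i ^ α)
    (hratio₂ : ∀ i, ∀ r : ℝ, 0 < r → r < rbar →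
      |(m (Metric.ball (xi i) r)).toReal / (m (Metric.ball x r)).toReal - 1| ≤ C * s i ^ α)
    (θ : ℕ → ℝ≥0∞)
    (hθ : ∀ i, 0 < θ i ∧ θ i < ⊤ ∧ HasDensity m n (xi i) (θ i)) :
    ∃ θlim : ℝ≥0∞, 0 < θlim ∧ θlim < ⊤ ∧ HasDensity m n x θlim ∧
      Tendsto θ atTop (𝓝 θlim) := by
  set f : ℝ → ℝ≥0∞ := fun r => densityRatio m n x r with hf
  set g : ℕ → ℝ → ℝ≥0∞ := fun i r => densityRatio m n (xi i) r with hg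
  set c : ℕ → ℝ≥0∞ := fun i => ENNReal.ofReal (1 + C * s i ^ α) with hc
  have hε : ∀ i, 0 ≤ C * s i ^ α := fun i =>
    mul_nonneg hC.le (Real.rpow_nonneg (hs_pos i).le α)
  have hc1 : ∀ i, 1 ≤ c i := fun i =>
    ENNReal.one_le_ofReal.mpr (by linarith [hε i])
  have hc0 : ∀ i, c i ≠ 0 := fun i => by
    intro h; exact absurd (h ▸ hc1 i) (by simp)
  have hctop : ∀ i, c i ≠ ⊤ := fun i => ENNReal.ofReal_ne_top
  -- c i → 1
  have hclim : Tendsto c atTop (𝓝 1) := by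
    have hsα : Tendsto (fun i => s i ^ α) atTop (𝓝 0) := by
      have hcont : ContinuousAt (fun y : ℝ => y ^ α) 0 :=
        Real.continuousAt_rpow_const 0 α (Or.inr hα.le)
      have := hcont.tendsto.comp hs_lim
      simpa [Function.comp_def, Real.zero_rpow hα.ne'] using this
    have hre : Tendsto (fun i => 1 + C * s i ^ α) atTop (𝓝 1) := by
      have := (hsα.const_mul C).const_add 1
      simpa using this
    have := (ENNReal.continuous_ofReal.tendsto 1).comp hre
    simpa [Function.comp_def] using this
  -- pointwise inequalities between density ratios
  have key₁ : ∀ i, ∀ r ∈ Ioo (0:ℝ) rbar, f r ≤ c i * g i r := by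
    intro i r hr
    have hA := hx_fin r hr.1 hr.2
    have hB := hxi_fin i r hr.1 hr.2
    have hAB : m (Metric.ball x r) ≤ c i * m (Metric.ball (xi i) r) :=
      aux_ofReal_le (hε i) hA.2.ne hB.2.ne hB.1.ne'
        (le_trans (le_abs_self _) (hratio₁ i r hr.1 hr.2))
    calc f r = m (Metric.ball x r) / ENNReal.ofReal (omegaN n * r ^ n) := rfl
      _ ≤ (c i * m (Metric.ball (xi i) r)) / ENNReal.ofReal (omegaN n * r ^ n) :=
          ENNReal.div_le_div_right hAB _
      _ = c i * g i r := by rw [mul_div_assoc]; rfl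
  have key₂ : ∀ i, ∀ r ∈ Ioo (0:ℝ) rbar, g i r ≤ c i * f r := by
    intro i r hr
    have hA := hx_fin r hr.1 hr.2
    have hB := hxi_fin i r hr.1 hr.2
    have hAB : m (Metric.ball (xi i) r) ≤ c i * m (Metric.ball x r) :=
      aux_ofReal_le (hε i) hB.2.ne hA.2.ne hA.1.ne'
        (le_trans (le_abs_self _) (hratio₂ i r hr.1 hr.2))
    calc g i r = m (Metric.ball (xi i) r) / ENNReal.ofReal (omegaN n * r ^ n) := rfl
      _ ≤ (c i * m (Metric.ball x r)) / ENNReal.ofReal (omegaN n * r ^ n) :=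
          ENNReal.div_le_div_right hAB _
      _ = c i * f r := by rw [mul_div_assoc]; rfl
  have hIoo : Ioo (0:ℝ) rbar ∈ 𝓝[>] (0:ℝ) := Ioo_mem_nhdsGT_of_mem ⟨le_refl 0, hrbar⟩
  set L := limsup f (𝓝[>] (0:ℝ)) with hLdef
  set l := liminf f (𝓝[>] (0:ℝ)) with hldef
  -- L ≤ c i * θ i
  have hL : ∀ i, L ≤ c i * θ i := by
    intro i
    have hev : ∀ᶠ r in 𝓝[>] (0:ℝ), f r ≤ c i * g i r :=
      eventually_of_mem hIoo (key₁ i)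
    have h1 : L ≤ limsup (fun r => c i * g i r) (𝓝[>] (0:ℝ)) := limsup_le_limsup hev
    have h2 : Tendsto (fun r => c i * g i r) (𝓝[>] (0:ℝ)) (𝓝 (c i * θ i)) :=
      ENNReal.Tendsto.const_mul (hθ i).2.2 (Or.inr (hctop i))
    rwa [h2.limsup_eq] at h1
  -- θ i ≤ c i * l
  have hl : ∀ i, θ i ≤ c i * l := by
    intro i
    have hev : ∀ᶠ r in 𝓝[>] (0:ℝ), g i r / c i ≤ f r := by
      refine eventually_of_mem hIoo (fun r hr => ?_)
      rw [ENNReal.div_le_iff_le_mul (Or.inl (hc0 i)) (Or.inl (hctop i))]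
      rw [mul_comm]; exact key₂ i r hr
    have h1 : liminf (fun r => g i r / c i) (𝓝[>] (0:ℝ)) ≤ l := liminf_le_liminf hev
    have h2 : Tendsto (fun r => g i r / c i) (𝓝[>] (0:ℝ)) (𝓝 (θ i / c i)) := by
      simp only [div_eq_mul_inv]
      exact ENNReal.Tendsto.mul_const (hθ i).2.2 (Or.inr (ENNReal.inv_ne_top.2 (hc0 i)))
    rw [h2.liminf_eq] at h1
    rwa [ENNReal.div_le_iff_le_mul (Or.inl (hc0 i)) (Or.inl (hctop i)), mul_comm] at h1
  have hLfin : L ≠ ⊤ := by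
    intro h
    have := hL 0
    rw [h] at this
    exact absurd (top_le_iff.mp this) (ENNReal.mul_ne_top (hctop 0) (hθ 0).2.1.ne)
  have hlL : l ≤ L := liminf_le_limsup
  have hlfin : l ≠ ⊤ := fun h => hLfin (top_le_iff.mp (h ▸ hlL))
  have hlpos : l ≠ 0 := by
    intro h
    have := hl 0
    rw [h, mul_zero] at this
    exact absurd (le_zero_iff.mp this) (hθ 0).1.ne'
  -- L ≤ l
  have hLl : L ≤ l := by
    have hchain : ∀ i, L ≤ c i * (c i * l) := fun i => (hL i).trans
      (mul_le_mul_right (hl i) _)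
    have htend : Tendsto (fun i => c i * (c i * l)) atTop (𝓝 (1 * (1 * l))) := by
      refine ENNReal.Tendsto.mul hclim (Or.inl one_ne_zero) ?_ (Or.inr ENNReal.one_ne_top)
      exact ENNReal.Tendsto.mul hclim (Or.inl one_ne_zero) tendsto_const_nhds
        (Or.inr ENNReal.one_ne_top)
    rw [one_mul, one_mul] at htend
    exact ge_of_tendsto' htend hchain
  have hLeq : L = l := le_antisymm hLl hlL
  refine ⟨L, ?_, ?_, ?_, ?_⟩
  · rw [hLeq]; exact pos_iff_ne_zero.mpr hlpos
  · exact lt_top_iff_ne_top.mpr hLfin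
  · exact tendsto_of_liminf_eq_limsup (hLeq ▸ hldef.symm) hLdef.symm
  · -- squeeze: L / c i ≤ θ i ≤ c i * L
    have hlow : ∀ i, L / c i ≤ θ i := fun i => by
      rw [ENNReal.div_le_iff_le_mul (Or.inl (hc0 i)) (Or.inl (hctop i)), mul_comm]
      exact hL i
    have hhigh : ∀ i, θ i ≤ c i * L := fun i => hLeq ▸ hl i
    have htlow : Tendsto (fun i => L / c i) atTop (𝓝 L) := by
      have : Tendsto (fun i => L / c i) atTop (𝓝 (L / 1)) := by
        simp only [div_eq_mul_inv]
        exact ENNReal.Tendsto.const_mul (ENNReal.tendsto_inv_iff.2 hclim)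
          (Or.inr hLfin)
      simpa using this
    have hthigh : Tendsto (fun i => c i * L) atTop (𝓝 L) := by
      have := ENNReal.Tendsto.mul_const (b := L) hclim (Or.inl one_ne_zero)
      simpa using this
    exact tendsto_of_tendsto_of_tendsto_of_le_of_le htlow hthigh hlow hhigh

end
end

section
/- Let (X,d) be a metric space, m a Borel measure on X, n ≥ 1 an integer, and γ: [0,1] → X a map. Assume that for every δ ∈ (0,1/20) there exist ε > 0, r̄ > 0, C > 0 and α > 0 such that 0 < m(B_r(γ_s)) < ∞ and |m(B_r(γ_s))/m(B_r(γ_{s'})) − 1| ≤ C·|s−s'|^α for every r ∈ (0,r̄) and all s, s' ∈ [δ, 1−δ] with |s−s'| < ε. If the set { t ∈ (0,1) : the n-dimensional density Θ_n(m,γ_t) exists and lies in (0,∞) } is dense in (0,1), then for every t ∈ (0,1) the density Θ_n(m,γ_t) exists and lies in (0,∞). -/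
open MeasureTheory Filter Set Metric Topology
open scoped ENNReal NNReal

noncomputable section

/-- The `n`-dimensional density of `m` at `x` exists and lies in `(0,∞)`. -/
def HasPosFiniteDensity {X : Type*} [PseudoMetricSpace X] [MeasurableSpace X]
    (m : Measure X) (n : ℕ) (x : X) : Prop :=
  ∃ θ : ℝ≥0∞, 0 < θ ∧ θ < ⊤ ∧ HasDensity m n x θ

/-! Near `t` pick a parameter `t'` with positive finite density and `C |t - t'|^α ≤ c`. For
small `r` the ratio `m(B_r(γ_t)) / m(B_r(γ_{t'}))` lies in `[1 - c, 1 + c]`, so the upper and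
lower densities at `γ_t` lie within the factors `1 ± c` of `Θ_n(m, γ_{t'})`. Hence
`(1 - c) Θ̄_n(m, γ_t) ≤ (1 + c) Θ̲_n(m, γ_t)` for every small `c > 0`, and letting `c → 0` the
two agree. -/

namespace ENNReal

lemma ofReal_one_sub_mul_le_and_le_ofReal_one_add_mul {a b : ℝ≥0∞} {c : ℝ}
    (ha : a ≠ ⊤) (hb₀ : b ≠ 0) (hb : b ≠ ⊤) (h : |a.toReal / b.toReal - 1| ≤ c) :
    ENNReal.ofReal (1 - c) * b ≤ a ∧ a ≤ ENNReal.ofReal (1 + c) * b := by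
  have hbR : 0 < b.toReal := toReal_pos hb₀ hb
  obtain ⟨hlower, hupper⟩ := abs_le.mp h
  have hc : 0 ≤ c := (abs_nonneg _).trans h
  constructor
  · rcases le_or_gt (1 - c) 0 with hc₁ | hc₁
    · simp [ENNReal.ofReal_of_nonpos hc₁]
    · rw [← ENNReal.ofReal_toReal ha, ← ENNReal.ofReal_toReal hb, ← ENNReal.ofReal_mul hc₁.le]
      exact ENNReal.ofReal_le_ofReal ((le_div_iff₀ hbR).mp (by linarith))
  · rw [← ENNReal.ofReal_toReal ha, ← ENNReal.ofReal_toReal hb, ← ENNReal.ofReal_mul (by linarith)]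
    exact ENNReal.ofReal_le_ofReal ((div_le_iff₀ hbR).mp (by linarith))

variable {α : Type*} {F : Filter α} {f : α → ℝ≥0∞}

lemma limsup_le_liminf_of_forall_mul_bounds
    (h : ∀ c : ℝ, 0 < c → c < 1 → ∃ θ : ℝ≥0∞,
      ENNReal.ofReal (1 - c) * θ ≤ liminf f F ∧ limsup f F ≤ ENNReal.ofReal (1 + c) * θ) :
    limsup f F ≤ liminf f F := by
  have hbounds : ∀ᶠ c in 𝓝[>] (0 : ℝ),
      ENNReal.ofReal (1 - c) * limsup f F ≤ ENNReal.ofReal (1 + c) * liminf f F := by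
    filter_upwards [Ioo_mem_nhdsGT one_pos] with c hc
    obtain ⟨θ, hl, hL⟩ := h c hc.1 hc.2
    calc ENNReal.ofReal (1 - c) * limsup f F
        ≤ ENNReal.ofReal (1 - c) * (ENNReal.ofReal (1 + c) * θ) := by gcongr
      _ = ENNReal.ofReal (1 + c) * (ENNReal.ofReal (1 - c) * θ) := by ring
      _ ≤ ENNReal.ofReal (1 + c) * liminf f F := by gcongr
  have hlim : ∀ (g : ℝ → ℝ) (a : ℝ≥0∞), Continuous g → g 0 = 1 →
      Tendsto (fun c => ENNReal.ofReal (g c) * a) (𝓝[>] 0) (𝓝 a) := by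
    intro g a hg hg₀
    have hg' : Tendsto (fun c => ENNReal.ofReal (g c)) (𝓝[>] 0) (𝓝 1) := by
      simpa [hg₀, Function.comp_def] using
        ((continuous_ofReal.comp hg).tendsto 0).mono_left nhdsWithin_le_nhds
    simpa using ENNReal.Tendsto.mul_const hg' (Or.inl one_ne_zero)
  exact le_of_tendsto_of_tendsto (hlim _ _ (by fun_prop) (by norm_num))
    (hlim _ _ (by fun_prop) (by norm_num)) hbounds

lemma exists_tendsto_of_forall_mul_approx [F.NeBot]
    (h : ∀ c : ℝ, 0 < c → ∃ g : α → ℝ≥0∞, ∃ θ : ℝ≥0∞, 0 < θ ∧ θ < ⊤ ∧ Tendsto g F (𝓝 θ) ∧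
      ∀ᶠ x in F, ENNReal.ofReal (1 - c) * g x ≤ f x ∧ f x ≤ ENNReal.ofReal (1 + c) * g x) :
    ∃ θ : ℝ≥0∞, 0 < θ ∧ θ < ⊤ ∧ Tendsto f F (𝓝 θ) := by
  have hbounds : ∀ c : ℝ, 0 < c → ∃ θ : ℝ≥0∞, 0 < θ ∧ θ < ⊤ ∧
      ENNReal.ofReal (1 - c) * θ ≤ liminf f F ∧ limsup f F ≤ ENNReal.ofReal (1 + c) * θ := by
    intro c hc
    obtain ⟨g, θ, hθ₀, hθ, hg, hfg⟩ := h c hc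
    refine ⟨θ, hθ₀, hθ, ?_, ?_⟩
    · rw [← (ENNReal.Tendsto.const_mul hg (Or.inr ENNReal.ofReal_ne_top)).liminf_eq]
      exact liminf_le_liminf (hfg.mono fun _ hx => hx.1)
    · rw [← (ENNReal.Tendsto.const_mul hg (Or.inr ENNReal.ofReal_ne_top)).limsup_eq]
      exact limsup_le_limsup (hfg.mono fun _ hx => hx.2)
  have hlim : liminf f F = limsup f F := le_antisymm liminf_le_limsup
    (limsup_le_liminf_of_forall_mul_bounds fun c hc _ =>
      (hbounds c hc).imp fun _ hθ => hθ.2.2)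
  obtain ⟨θ, hθ₀, hθ, hl, hL⟩ := hbounds (1 / 2) one_half_pos
  refine ⟨liminf f F, ?_, ?_, tendsto_of_liminf_eq_limsup rfl hlim.symm⟩
  · refine lt_of_lt_of_le (mul_pos ?_ hθ₀.ne') hl
    norm_num
  · rw [hlim]
    exact hL.trans_lt (mul_lt_top ENNReal.ofReal_lt_top hθ)

end ENNReal

section Density

variable {X : Type*} [PseudoMetricSpace X] [MeasurableSpace X] {m : Measure X} {n : ℕ}
  {x y : X} {r : ℝ} {k : ℝ≥0∞}

lemma mul_densityRatio_le_of_mul_le (h : k * m (ball y r) ≤ m (ball x r)) :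
    k * densityRatio m n y r ≤ densityRatio m n x r := by
  simpa only [densityRatio, mul_div_assoc] using ENNReal.div_le_div_right h _

lemma densityRatio_le_mul_of_le_mul (h : m (ball x r) ≤ k * m (ball y r)) :
    densityRatio m n x r ≤ k * densityRatio m n y r := by
  simpa only [densityRatio, mul_div_assoc] using ENNReal.div_le_div_right h _

lemma hasPosFiniteDensity_of_forall_mul_approx
    (h : ∀ c : ℝ, 0 < c → ∃ y, HasPosFiniteDensity m n y ∧ ∀ᶠ r in 𝓝[>] 0,
      ENNReal.ofReal (1 - c) * m (ball y r) ≤ m (ball x r) ∧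
        m (ball x r) ≤ ENNReal.ofReal (1 + c) * m (ball y r)) :
    HasPosFiniteDensity m n x := by
  refine ENNReal.exists_tendsto_of_forall_mul_approx fun c hc => ?_
  obtain ⟨y, ⟨θ, hθ₀, hθ, hy⟩, hball⟩ := h c hc
  exact ⟨densityRatio m n y, θ, hθ₀, hθ, hy,
    hball.mono fun _ hr => ⟨mul_densityRatio_le_of_mul_le hr.1, densityRatio_le_mul_of_le_mul hr.2⟩⟩

end Density

lemma exists_ball_subset_Icc {t : ℝ} (ht : t ∈ Ioo (0 : ℝ) 1) :
    ∃ δ : ℝ, 0 < δ ∧ δ < 1 / 20 ∧ ball t δ ⊆ Icc δ (1 - δ) := by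
  obtain ⟨ht₀, ht₁⟩ := ht
  set μ := min (min t (1 - t)) (1 / 10)
  have hμt : μ ≤ t := (min_le_left _ _).trans (min_le_left _ _)
  have hμt' : μ ≤ 1 - t := (min_le_left _ _).trans (min_le_right _ _)
  have hμ : μ ≤ 1 / 10 := min_le_right _ _
  refine ⟨μ / 3, by positivity, by linarith, fun s hs => ?_⟩
  rw [Real.ball_eq_Ioo] at hs
  exact ⟨by linarith [hs.1], by linarith [hs.2]⟩

theorem statement5_general
    {X : Type*} [MetricSpace X] [MeasurableSpace X]
    (m : Measure X) (n : ℕ) (γ : ℝ → X)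
    (hHolder : ∀ δ : ℝ, 0 < δ → δ < 1 / 20 →
      ∃ (ε : ℝ) (rbar : ℝ) (C : ℝ) (α : ℝ), 0 < ε ∧ 0 < rbar ∧ 0 < C ∧ 0 < α ∧
        ∀ r : ℝ, 0 < r → r < rbar →
          (∀ s ∈ Set.Icc δ (1 - δ),
            0 < m (Metric.ball (γ s) r) ∧ m (Metric.ball (γ s) r) < ⊤) ∧
          (∀ s ∈ Set.Icc δ (1 - δ), ∀ s' ∈ Set.Icc δ (1 - δ), |s - s'| < ε →
            |(m (Metric.ball (γ s) r)).toReal / (m (Metric.ball (γ s') r)).toReal - 1| ≤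
              C * |s - s'| ^ α))
    (hdense : ∀ t ∈ Set.Ioo (0 : ℝ) 1,
      t ∈ closure {t' : ℝ | t' ∈ Set.Ioo (0 : ℝ) 1 ∧ HasPosFiniteDensity m n (γ t')}) :
    ∀ t ∈ Set.Ioo (0 : ℝ) 1, HasPosFiniteDensity m n (γ t) := by
  intro t ht
  obtain ⟨δ, hδ₀, hδ, hball⟩ := exists_ball_subset_Icc ht
  have htIcc : t ∈ Icc δ (1 - δ) := hball (mem_ball_self hδ₀)
  obtain ⟨ε, rbar, C, α, hε, hrbar, -, hα, hH⟩ := hHolder δ hδ₀ hδ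
  refine hasPosFiniteDensity_of_forall_mul_approx fun c hc => ?_
  have hcont : Continuous fun s => C * |t - s| ^ α := by fun_prop (disch := exact hα.le)
  have hnear : ∀ᶠ s in 𝓝 t, s ∈ Icc δ (1 - δ) ∧ |t - s| < ε ∧ C * |t - s| ^ α < c := by
    refine Eventually.and (mem_of_superset (ball_mem_nhds t hδ₀) hball) (.and ?_ ?_)
    · exact (eventually_abs_sub_lt t hε).mono fun s hs => by rwa [abs_sub_comm]
    · exact hcont.continuousAt.eventually_lt continuousAt_const
        (by simp [Real.zero_rpow hα.ne', hc])
  obtain ⟨t', ⟨hIcc, hdist, hc'⟩, -, ht'⟩ := mem_closure_iff_nhds.mp (hdense t ht) _ hnear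
  refine ⟨γ t', ht', ?_⟩
  filter_upwards [Ioo_mem_nhdsGT hrbar] with r hr
  obtain ⟨hfin, hhold⟩ := hH r hr.1 hr.2
  exact ENNReal.ofReal_one_sub_mul_le_and_le_ofReal_one_add_mul (hfin t htIcc).2.ne
    (hfin t' hIcc).1.ne' (hfin t' hIcc).2.ne ((hhold t htIcc t' hIcc hdist).trans hc'.le)

/-- Let `γ : [0,1] → X` be a curve along which the volume ratios
`m(B_r(γ_s))/m(B_r(γ_{s'}))` are Hölder continuous in the parameter, on every interval
`[δ, 1−δ]` with `δ ∈ (0,1/20)`. If the set of `t ∈ (0,1)` at which the `n`-density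
`Θ_n(m,γ_t)` exists and lies in `(0,∞)` is dense in `(0,1)`, then `Θ_n(m,γ_t)` exists and
lies in `(0,∞)` for every `t ∈ (0,1)`. -/
theorem statement5
    {X : Type*} [MetricSpace X] [MeasurableSpace X]
    (m : Measure X) (n : ℕ) (hn : 1 ≤ n) (γ : ℝ → X)
    (hHolder : ∀ δ : ℝ, 0 < δ → δ < 1 / 20 →
      ∃ (ε : ℝ) (rbar : ℝ) (C : ℝ) (α : ℝ), 0 < ε ∧ 0 < rbar ∧ 0 < C ∧ 0 < α ∧
        ∀ r : ℝ, 0 < r → r < rbar →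
          (∀ s ∈ Set.Icc δ (1 - δ),
            0 < m (Metric.ball (γ s) r) ∧ m (Metric.ball (γ s) r) < ⊤) ∧
          (∀ s ∈ Set.Icc δ (1 - δ), ∀ s' ∈ Set.Icc δ (1 - δ), |s - s'| < ε →
            |(m (Metric.ball (γ s) r)).toReal / (m (Metric.ball (γ s') r)).toReal - 1| ≤
              C * |s - s'| ^ α))
    (hdense : ∀ t ∈ Set.Ioo (0 : ℝ) 1,
      t ∈ closure {t' : ℝ | t' ∈ Set.Ioo (0 : ℝ) 1 ∧ HasPosFiniteDensity m n (γ t')}) :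
    ∀ t ∈ Set.Ioo (0 : ℝ) 1, HasPosFiniteDensity m n (γ t) :=
  statement5_general m n γ hHolder hdense

end
end

section
/- Let (X,d) be a metric space and endow X×ℝ with the distance d̃((x,t),(y,s)) = sqrt(d(x,y)² + (t−s)²). Let μ be a Borel measure on X×ℝ, Σ ⊆ X×ℝ a Borel set, n ≥ 1 an integer, p = (x,t) ∈ X×ℝ, β ∈ (0,1), and γ = sqrt((1+β)/(1−β)). If lim_{r→0⁺} μ( (Σ ∩ B_r(p)) ∖ (X×(t−βr, t+βr)) ) / rⁿ = 0, then lim_{r→0⁺} μ( (Σ ∩ B_r(p)) ∖ C_γ(p) ) / rⁿ = 0, where C_γ(p) = {(y,s) ∈ X×ℝ : γ·d(y,x) ≥ |s−t|} and balls are taken with respect to d̃. -/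
open MeasureTheory Filter Set Metric Topology
open scoped ENNReal NNReal

noncomputable section

/-- The cone `C_γ(p) = {(y,s) ∈ X × ℝ : γ·d(y,x) ≥ |s − t|}` for `p = (x,t)`. -/
def cone {X : Type*} [PseudoMetricSpace X] (γ : ℝ) (p : X × ℝ) : Set (X × ℝ) :=
  {q | |q.2 - p.2| ≤ γ * dist q.1 p.1}

set_option maxHeartbeats 1000000 in
/-- Let `μ` be a Borel measure on `X × ℝ` (with the ℓ² product distance),
`Σ` a Borel set, `p = (x,t)`, `β ∈ (0,1)`, and `γ = sqrt((1+β)/(1−β))`. If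
`μ((Σ ∩ B_r(p)) ∖ (X × (t−βr, t+βr)))/rⁿ → 0` as `r → 0⁺`, then
`μ((Σ ∩ B_r(p)) ∖ C_γ(p))/rⁿ → 0` as `r → 0⁺`. -/
theorem statement6
    {X : Type*} [MetricSpace X] [MeasurableSpace X] [BorelSpace X]
    (μ : Measure (X × ℝ)) (S : Set (X × ℝ)) (hS : MeasurableSet S)
    (n : ℕ) (hn : 1 ≤ n) (p : X × ℝ) (β : ℝ) (hβ : β ∈ Set.Ioo (0 : ℝ) 1)
    (γ : ℝ) (hγ : γ = Real.sqrt ((1 + β) / (1 - β)))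
    (h : Tendsto
      (fun r : ℝ =>
        μ ((S ∩ ball2 p r) \ (Set.univ ×ˢ Set.Ioo (p.2 - β * r) (p.2 + β * r))) /
          ENNReal.ofReal (r ^ n))
      (𝓝[>] (0 : ℝ)) (𝓝 0)) :
    Tendsto
      (fun r : ℝ => μ ((S ∩ ball2 p r) \ cone γ p) / ENNReal.ofReal (r ^ n))
      (𝓝[>] (0 : ℝ)) (𝓝 0) := by
  obtain ⟨hβ0, hβ1⟩ := hβ
  set L : ℝ := Real.sqrt ((1 + β) / 2) / β with hLdef
  have hs0 : (0:ℝ) < (1 + β) / 2 := by linarith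
  have hssq : Real.sqrt ((1 + β) / 2) ^ 2 = (1 + β) / 2 := Real.sq_sqrt hs0.le
  have hspos : 0 < Real.sqrt ((1 + β) / 2) := Real.sqrt_pos.mpr hs0
  have hL1 : 1 < L := by
    rw [hLdef, lt_div_iff₀ hβ0, one_mul]
    nlinarith [hssq, hspos]
  have hLpos : 0 < L := lt_trans one_pos hL1
  have hβL : β * L = Real.sqrt ((1 + β) / 2) := by
    rw [hLdef]; field_simp
  have hγpos : 0 < γ := by
    rw [hγ]; exact Real.sqrt_pos.mpr (div_pos (by linarith) (by linarith))
  have hγsq : γ ^ 2 * (1 - β) = 1 + β := by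
    rw [hγ, Real.sq_sqrt (le_of_lt (div_pos (by linarith) (by linarith)))]
    rw [div_mul_eq_mul_div, mul_div_assoc, div_self (by linarith : (1:ℝ) - β ≠ 0), mul_one]
  -- pointwise covering lemma
  have key : ∀ r : ℝ, 0 < r → ∀ q ∈ (S ∩ ball2 p r) \ cone γ p,
      ∃ j : ℕ, q ∈ (S ∩ ball2 p (r / L ^ j)) \
        (Set.univ ×ˢ Set.Ioo (p.2 - β * (r / L ^ j)) (p.2 + β * (r / L ^ j))) := by
    intro r hr q hq
    obtain ⟨⟨hqS, hqball⟩, hqcone⟩ := hq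
    have hDa : γ * dist q.1 p.1 < |q.2 - p.2| := lt_of_not_ge hqcone
    set D := dist q.1 p.1 with hD
    set a := |q.2 - p.2| with ha
    have hD0 : (0:ℝ) ≤ D := dist_nonneg
    have ha0 : 0 < a := lt_of_le_of_lt (by positivity) hDa
    set ρ := dist2 p q with hρdef
    have hρ0 : 0 ≤ ρ := Real.sqrt_nonneg _
    have hρsq : ρ ^ 2 = D ^ 2 + a ^ 2 := by
      have h1 : dist2 p q = Real.sqrt (D ^ 2 + a ^ 2) := by
        rw [dist2, dist_comm p.1 q.1, ← hD, ha, ← sq_abs (p.2 - q.2), abs_sub_comm]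
      rw [hρdef, h1, Real.sq_sqrt (by positivity)]
    have hρpos : 0 < ρ := by nlinarith
    have hDa2 : (γ * D) ^ 2 < a ^ 2 :=
      pow_lt_pow_left₀ hDa (by positivity) (by norm_num)
    have hD2 : (1 + β) * D ^ 2 < (1 - β) * a ^ 2 := by nlinarith
    have hmain : Real.sqrt ((1 + β) / 2) * ρ < a := by
      have hsq : (Real.sqrt ((1 + β) / 2) * ρ) ^ 2 < a ^ 2 := by
        rw [mul_pow, hssq, hρsq]; nlinarith
      nlinarith [mul_nonneg hspos.le hρ0]
    have hρr : ρ < r := hqball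
    have hrρ : 1 < r / ρ := (one_lt_div hρpos).mpr hρr
    have hex : ∃ k, r / ρ ≤ L ^ k := by
      obtain ⟨k, hk⟩ := pow_unbounded_of_one_lt (r / ρ) hL1
      exact ⟨k, hk.le⟩
    classical
    have hm1 : r / ρ ≤ L ^ (Nat.find hex) := Nat.find_spec hex
    have hmne : Nat.find hex ≠ 0 := by
      intro h0; rw [h0, pow_zero] at hm1; linarith
    obtain ⟨j, hjm⟩ := Nat.exists_eq_succ_of_ne_zero hmne
    have hj : ¬ (r / ρ ≤ L ^ j) := by
      have := Nat.find_min hex (m := j) (by omega)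
      exact this
    push_neg at hj
    rw [hjm] at hm1
    have hLj : (0:ℝ) < L ^ j := pow_pos hLpos j
    refine ⟨j, ⟨⟨hqS, ?_⟩, ?_⟩⟩
    · show dist2 p q < r / L ^ j
      rw [← hρdef, lt_div_iff₀ hLj, mul_comm ρ (L ^ j)]
      rw [lt_div_iff₀ hρpos] at hj
      exact hj
    · rintro ⟨-, hmem2⟩
      have habs : a < β * (r / L ^ j) := by
        rw [ha]
        apply abs_lt.mpr
        exact ⟨by linarith [hmem2.1], by linarith [hmem2.2]⟩
      have h1 : r ≤ ρ * L ^ (j + 1) := by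
        rw [div_le_iff₀ hρpos] at hm1
        rw [mul_comm]; exact hm1
      have h2 : r / L ^ j ≤ ρ * L := by
        rw [div_le_iff₀ hLj]
        calc r ≤ ρ * L ^ (j + 1) := h1
          _ = ρ * L * L ^ j := by ring
      have h3 : β * (r / L ^ j) ≤ β * (ρ * L) := by
        exact mul_le_mul_of_nonneg_left h2 hβ0.le
      have h4 : β * (ρ * L) = Real.sqrt ((1 + β) / 2) * ρ := by
        rw [← hβL]; ring
      linarith
  -- measure-theoretic part
  rw [ENNReal.tendsto_nhds_zero] at h ⊢
  intro ε hε
  set x : ℝ≥0∞ := ENNReal.ofReal ((L⁻¹) ^ n) with hxdef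
  have hx1 : x < 1 := by
    rw [hxdef]
    apply ENNReal.ofReal_lt_one.mpr
    exact pow_lt_one₀ (by positivity) (inv_lt_one_of_one_lt₀ hL1) (by omega)
  set C : ℝ≥0∞ := (1 - x)⁻¹ with hCdef
  have h1x : 1 - x ≠ 0 := by
    simpa [pos_iff_ne_zero] using tsub_pos_of_lt hx1
  have hC0 : C ≠ 0 := by
    rw [hCdef]
    exact ENNReal.inv_ne_zero.mpr (by
      exact ne_top_of_le_ne_top ENNReal.one_ne_top tsub_le_self)
  have hCt : C ≠ ⊤ := by
    rw [hCdef]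
    exact ENNReal.inv_ne_top.mpr h1x
  set ε' : ℝ≥0∞ := ε / C with hε'def
  have hε' : 0 < ε' := by
    rw [hε'def]
    exact ENNReal.div_pos hε.ne' hCt
  obtain ⟨δ, hδ, hδsub⟩ := mem_nhdsGT_iff_exists_Ioc_subset.mp (h ε' hε')
  filter_upwards [Ioc_mem_nhdsGT_of_mem (show (0:ℝ) ∈ Set.Ico (0:ℝ) δ from ⟨le_refl _, hδ⟩)]
    with r hr
  obtain ⟨hr0, hrδ⟩ := hr
  have hrn0 : ENNReal.ofReal (r ^ n) ≠ 0 := by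
    simp [ENNReal.ofReal_pos, pow_pos hr0]
  apply ENNReal.div_le_of_le_mul
  set F : ℕ → Set (X × ℝ) := fun j =>
    (S ∩ ball2 p (r / L ^ j)) \
      (Set.univ ×ˢ Set.Ioo (p.2 - β * (r / L ^ j)) (p.2 + β * (r / L ^ j))) with hFdef
  have hsub : (S ∩ ball2 p r) \ cone γ p ⊆ ⋃ j, F j := by
    intro q hq
    obtain ⟨j, hj⟩ := key r hr0 q hq
    exact Set.mem_iUnion.mpr ⟨j, hj⟩
  have hterm : ∀ j : ℕ, μ (F j) ≤ ε' * (ENNReal.ofReal (r ^ n) * x ^ j) := by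
    intro j
    have hLj : (0:ℝ) < L ^ j := pow_pos hLpos j
    have hrj0 : 0 < r / L ^ j := div_pos hr0 hLj
    have hrjr : r / L ^ j ≤ r := div_le_self hr0.le (one_le_pow₀ hL1.le)
    have hmem : r / L ^ j ∈ Set.Ioc (0:ℝ) δ := ⟨hrj0, le_trans hrjr hrδ⟩
    have hb := hδsub hmem
    have hrjn0 : ENNReal.ofReal ((r / L ^ j) ^ n) ≠ 0 := by
      simp [ENNReal.ofReal_pos, pow_pos hrj0]
    have hb2 : μ (F j) ≤ ε' * ENNReal.ofReal ((r / L ^ j) ^ n) :=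
      (ENNReal.div_le_iff hrjn0 ENNReal.ofReal_ne_top).mp hb
    have heq : ENNReal.ofReal ((r / L ^ j) ^ n) = ENNReal.ofReal (r ^ n) * x ^ j := by
      rw [hxdef, ← ENNReal.ofReal_pow (by positivity), ← ENNReal.ofReal_mul (by positivity)]
      congr 1
      rw [div_pow, ← pow_mul, ← pow_mul, div_eq_mul_inv, ← inv_pow, Nat.mul_comm]
    rw [heq] at hb2
    exact hb2
  calc μ ((S ∩ ball2 p r) \ cone γ p) ≤ μ (⋃ j, F j) := measure_mono hsub
    _ ≤ ∑' j, μ (F j) := measure_iUnion_le F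
    _ ≤ ∑' j, ε' * (ENNReal.ofReal (r ^ n) * x ^ j) := ENNReal.tsum_le_tsum hterm
    _ = ε' * (ENNReal.ofReal (r ^ n) * ∑' j, x ^ j) := by
        rw [ENNReal.tsum_mul_left, ENNReal.tsum_mul_left]
    _ = ε' * (ENNReal.ofReal (r ^ n) * C) := by rw [ENNReal.tsum_geometric, ← hCdef]
    _ = (ε' * C) * ENNReal.ofReal (r ^ n) := by ring
    _ = ε * ENNReal.ofReal (r ^ n) := by
        rw [hε'def, ENNReal.div_mul_cancel hC0 hCt]

end
end

section
/- Let (X,d) be a metric space and endow X×ℝ with the distance d̃((x,t),(y,s)) = sqrt(d(x,y)² + (t−s)²). Let β ∈ (0,1), γ = sqrt((1+β)/(1−β)), p = (x,t) ∈ X×ℝ, and r₀ > 0. Define r_i := (β·sqrt((γ²+1)/γ²))^i · r₀ for i ∈ ℕ (note that β·sqrt((γ²+1)/γ²) = β·sqrt(2/(1+β)) < 1). Then B_{r₀}(p) ∖ C_γ(p) ⊆ ⋃_{i∈ℕ} ( B_{r_i}(p) ∖ (X×(t−βr_i, t+βr_i)) ), where C_γ(p) = {(y,s) ∈ X×ℝ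 : γ·d(y,x) ≥ |s−t|} and balls are taken with respect to d̃. -/
open MeasureTheory Filter Set Metric Topology
open scoped ENNReal NNReal

noncomputable section

/-- Let `β ∈ (0,1)`, `γ = sqrt((1+β)/(1−β))`, `p = (x,t) ∈ X × ℝ` and
`r₀ > 0`. With `r_i := (β·sqrt((γ²+1)/γ²))^i · r₀`, one has
`B_{r₀}(p) ∖ C_γ(p) ⊆ ⋃_i (B_{r_i}(p) ∖ (X × (t−βr_i, t+βr_i)))`, where the balls on
`X × ℝ` are taken with respect to the ℓ² product distance. -/
theorem statement7
    {X : Type*} [MetricSpace X]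
    (β : ℝ) (hβ : β ∈ Set.Ioo (0 : ℝ) 1)
    (γ : ℝ) (hγ : γ = Real.sqrt ((1 + β) / (1 - β)))
    (p : X × ℝ) (r₀ : ℝ) (hr₀ : 0 < r₀)
    (ri : ℕ → ℝ) (hri : ∀ i : ℕ, ri i = (β * Real.sqrt ((γ ^ 2 + 1) / γ ^ 2)) ^ i * r₀) :
    ball2 p r₀ \ cone γ p ⊆
      ⋃ i : ℕ,
        (ball2 p (ri i) \ (Set.univ ×ˢ Set.Ioo (p.2 - β * ri i) (p.2 + β * ri i))) := by
  obtain ⟨hβ0, hβ1⟩ := hβ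
  have h1β : (0:ℝ) < 1 - β := by linarith
  have h1β' : (0:ℝ) < 1 + β := by linarith
  have hγ2 : γ ^ 2 = (1 + β) / (1 - β) := by
    rw [hγ, Real.sq_sqrt (by positivity)]
  have hγpos : 0 < γ := by rw [hγ]; exact Real.sqrt_pos.2 (by positivity)
  have hγ2pos : 0 < γ ^ 2 := by positivity
  set c := β * Real.sqrt ((γ ^ 2 + 1) / γ ^ 2) with hc
  have harg : (γ ^ 2 + 1) / γ ^ 2 = 2 / (1 + β) := by
    rw [hγ2]; field_simp; ring
  have hargnn : (0:ℝ) ≤ (γ ^ 2 + 1) / γ ^ 2 := by positivity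
  have hcsq : c ^ 2 = 2 * β ^ 2 / (1 + β) := by
    rw [hc, mul_pow, Real.sq_sqrt hargnn, harg]; field_simp
  have hc0 : 0 < c := by
    rw [hc]; exact mul_pos hβ0 (Real.sqrt_pos.2 (by positivity))
  have hcsq1 : c ^ 2 < 1 := by
    rw [hcsq, div_lt_one h1β']; nlinarith
  have hc1 : c < 1 := by nlinarith [hcsq1, hc0]
  intro q hq
  obtain ⟨hball, hcone⟩ := hq
  have hcone' : γ * dist q.1 p.1 < |q.2 - p.2| := by
    simpa [cone, not_le] using hcone
  set d := dist q.1 p.1 with hd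
  set h := |q.2 - p.2| with hh
  have hdnn : 0 ≤ d := dist_nonneg
  have hpos : 0 < h := lt_of_le_of_lt (by positivity) hcone'
  have hDdef : dist2 p q = Real.sqrt (d ^ 2 + h ^ 2) := by
    unfold dist2
    rw [show dist p.1 q.1 = d from dist_comm p.1 q.1,
      show (p.2 - q.2) ^ 2 = h ^ 2 by rw [hh, sq_abs]; ring]
  have hDnn : 0 ≤ dist2 p q := by rw [hDdef]; positivity
  have hsqlt : d ^ 2 + h ^ 2 < h ^ 2 * ((γ ^ 2 + 1) / γ ^ 2) := by
    have h1 : (γ * d) ^ 2 < h ^ 2 :=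
      pow_lt_pow_left₀ hcone' (by positivity) two_ne_zero
    have h2 : h ^ 2 * ((γ ^ 2 + 1) / γ ^ 2) = h ^ 2 + h ^ 2 / γ ^ 2 := by
      field_simp
    rw [h2]
    have h3 : d ^ 2 < h ^ 2 / γ ^ 2 := by
      rw [lt_div_iff₀ hγ2pos]; nlinarith [h1]
    linarith
  have hDlt : dist2 p q < h * Real.sqrt ((γ ^ 2 + 1) / γ ^ 2) := by
    have hlt := Real.sqrt_lt_sqrt (by positivity) hsqlt
    rw [hDdef]
    calc Real.sqrt (d ^ 2 + h ^ 2) < Real.sqrt (h ^ 2 * ((γ ^ 2 + 1) / γ ^ 2)) := hlt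
      _ = h * Real.sqrt ((γ ^ 2 + 1) / γ ^ 2) := by
          rw [Real.sqrt_mul (sq_nonneg h), Real.sqrt_sq hpos.le]
  have hkey : β * dist2 p q < c * h := by
    rw [hc]
    calc β * dist2 p q < β * (h * Real.sqrt ((γ ^ 2 + 1) / γ ^ 2)) :=
          mul_lt_mul_of_pos_left hDlt hβ0
      _ = β * Real.sqrt ((γ ^ 2 + 1) / γ ^ 2) * h := by ring
  have hex : ∃ n : ℕ, c ^ n * r₀ ≤ h / β := by
    obtain ⟨n, hn⟩ := exists_pow_lt_of_lt_one (show (0:ℝ) < h / β / r₀ by positivity) hc1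
    exact ⟨n, le_of_lt (by rw [← lt_div_iff₀ hr₀]; exact hn)⟩
  classical
  have hgoal : dist2 p q < c ^ Nat.find hex * r₀ ∧ β * (c ^ Nat.find hex * r₀) ≤ h := by
    have hnspec : c ^ Nat.find hex * r₀ ≤ h / β := Nat.find_spec hex
    refine ⟨?_, by rw [mul_comm]; exact (le_div_iff₀ hβ0).mp hnspec⟩
    rcases hcase : Nat.find hex with _ | m
    · simpa [ball2, Set.mem_setOf_eq] using hball
    · have hprev : ¬ (c ^ m * r₀ ≤ h / β) := Nat.find_min hex (by omega)
      push_neg at hprev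
      have hstep : c * (h / β) < c * (c ^ m * r₀) := mul_lt_mul_of_pos_left hprev hc0
      have hDc : dist2 p q < c * (h / β) := by
        rw [← mul_div_assoc, lt_div_iff₀ hβ0]
        nlinarith [hkey]
      calc dist2 p q < c * (c ^ m * r₀) := lt_trans hDc hstep
        _ = c ^ (m + 1) * r₀ := by ring
  refine Set.mem_iUnion.2 ⟨Nat.find hex, ?_, ?_⟩
  · show dist2 p q < ri (Nat.find hex)
    rw [hri]
    exact hgoal.1
  · intro hmem
    obtain ⟨-, h2⟩ := hmem
    simp only [Set.mem_Ioo] at h2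
    have habs : |q.2 - p.2| < β * ri (Nat.find hex) :=
      abs_lt.2 ⟨by linarith [h2.1], by linarith [h2.2]⟩
    rw [hri, ← hh] at habs
    exact absurd hgoal.2 (not_le.2 habs)

end
end

section
/- Let (X,d) be a metric space and endow X×ℝ with the distance d̃((x,t),(y,s)) = sqrt(d(x,y)² + (t−s)²). Let γ > 0 and let p = (x,t), q = (y,s) ∈ X×ℝ with q ∉ C_{2γ}(p), i.e. 2γ·d(y,x) < |s−t|. Set ρ := d̃(p,q)·sin(arctan(2γ) − arctan(γ)). Then B_ρ(q) ⊆ B_{d̃(p,q)+ρ}(p) ∖ C_γ(p), where C_γ(p) = {(y',s') ∈ X×ℝ : γ·d(y',x) ≥ |s'−t|} and balls are taken with respect to d̃. -/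
open MeasureTheory Filter Set Metric Topology
open scoped ENNReal NNReal

noncomputable section

private lemma le_of_sq_le_sq'' {x y : ℝ} (h : x^2 ≤ y^2) (hx : 0 ≤ x) (hy : 0 ≤ y) : x ≤ y := by
  nlinarith

private lemma sqrt_tri (a1 a2 b1 b2 A B : ℝ) (ha1 : 0 ≤ a1) (ha2 : 0 ≤ a2)
    (hA : 0 ≤ A) (hB : 0 ≤ B) (h1 : A ≤ a1 + a2) (h2 : B ≤ |b1| + |b2|) :
    Real.sqrt (A^2 + B^2) ≤ Real.sqrt (a1^2 + b1^2) + Real.sqrt (a2^2 + b2^2) := by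
  set S1 := Real.sqrt (a1^2 + b1^2) with hS1d
  set S2 := Real.sqrt (a2^2 + b2^2) with hS2d
  have hS1 : S1^2 = a1^2 + b1^2 := Real.sq_sqrt (by positivity)
  have hS2 : S2^2 = a2^2 + b2^2 := Real.sq_sqrt (by positivity)
  have hS1n : 0 ≤ S1 := Real.sqrt_nonneg _
  have hS2n : 0 ≤ S2 := Real.sqrt_nonneg _
  have hCS : a1 * a2 + |b1| * |b2| ≤ S1 * S2 := by
    apply le_of_sq_le_sq'' _ (by positivity) (mul_nonneg hS1n hS2n)
    rw [mul_pow, hS1, hS2]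
    nlinarith [sq_nonneg (a1 * |b2| - a2 * |b1|), sq_abs b1, sq_abs b2]
  apply le_of_sq_le_sq'' _ (Real.sqrt_nonneg _) (by positivity)
  rw [Real.sq_sqrt (by positivity)]
  have e1 : A^2 ≤ (a1+a2)^2 := by nlinarith
  have e2 : B^2 ≤ (|b1|+|b2|)^2 := by nlinarith [abs_nonneg b1, abs_nonneg b2]
  nlinarith [sq_abs b1, sq_abs b2]

set_option maxHeartbeats 800000 in
/-- Let `γ > 0` and `p, q ∈ X × ℝ` with `q ∉ C_{2γ}(p)` (that is,
`2γ·d(q₁,p₁) < |q₂ − p₂|`). With `ρ := d̃(p,q)·sin(arctan(2γ) − arctan γ)`, one has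
`B_ρ(q) ⊆ B_{d̃(p,q)+ρ}(p) ∖ C_γ(p)`, where the balls are taken with respect to the
ℓ² product distance `d̃` on `X × ℝ`. -/
theorem statement8
    {X : Type*} [MetricSpace X]
    (γ : ℝ) (hγ : 0 < γ) (p q : X × ℝ)
    (hq : 2 * γ * dist q.1 p.1 < |q.2 - p.2|)
    (ρ : ℝ) (hρ : ρ = dist2 p q * Real.sin (Real.arctan (2 * γ) - Real.arctan γ)) :
    ball2 q ρ ⊆ ball2 p (dist2 p q + ρ) \ cone γ p := by
  intro z hz
  have hz' : dist2 q z < ρ := hz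
  set a := dist q.1 p.1 with hadef
  set b := |q.2 - p.2| with hbdef
  have ha0 : 0 ≤ a := dist_nonneg
  have hb0 : 0 ≤ b := abs_nonneg _
  have hab : 2*γ*a < b := hq
  set S1 := Real.sqrt (1 + γ^2) with hS1def
  set S2 := Real.sqrt (1 + 4*γ^2) with hS2def
  have hS1pos : 0 < S1 := Real.sqrt_pos.2 (by positivity)
  have hS2pos : 0 < S2 := Real.sqrt_pos.2 (by positivity)
  have hD : dist2 p q = Real.sqrt (a^2 + b^2) := by
    unfold dist2
    rw [dist_comm p.1 q.1]
    congr 1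
    rw [hbdef, sq_abs]
    ring
  have hsin : Real.sin (Real.arctan (2*γ) - Real.arctan γ) = γ / (S1 * S2) := by
    rw [Real.sin_sub, Real.sin_arctan, Real.cos_arctan, Real.sin_arctan, Real.cos_arctan]
    have e : (1 : ℝ) + (2*γ)^2 = 1 + 4*γ^2 := by ring
    rw [e, ← hS1def, ← hS2def]
    field_simp
    ring
  -- triangle inequality
  have htri : dist2 p z ≤ dist2 p q + dist2 q z := by
    unfold dist2
    have h2 : |p.2 - z.2| ≤ |p.2 - q.2| + |q.2 - z.2| := abs_sub_le _ _ _
    have := sqrt_tri (dist p.1 q.1) (dist q.1 z.1) (p.2 - q.2) (q.2 - z.2)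
      (dist p.1 z.1) |p.2 - z.2| dist_nonneg dist_nonneg dist_nonneg (abs_nonneg _)
      (dist_triangle p.1 q.1 z.1) h2
    rwa [sq_abs] at this
  refine ⟨?_, fun hc => ?_⟩
  · show dist2 p z < dist2 p q + ρ
    linarith
  · -- z in cone: contradiction
    have hc' : |z.2 - p.2| ≤ γ * dist z.1 p.1 := hc
    set a' := dist z.1 p.1 with ha'def
    set b' := |z.2 - p.2| with hb'def
    have h1 : |a - a'| ≤ dist q.1 z.1 := abs_dist_sub_le q.1 z.1 p.1
    have h2 : |b - b'| ≤ |q.2 - z.2| := by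
      have h := abs_abs_sub_abs_le_abs_sub (q.2 - p.2) (z.2 - p.2)
      simpa [sub_sub_sub_cancel_right] using h
    set T := Real.sqrt ((a - a')^2 + (b - b')^2) with hTdef
    have hlow : T ≤ dist2 q z := by
      unfold dist2
      apply Real.sqrt_le_sqrt
      have e1 : (a - a')^2 ≤ dist q.1 z.1^2 := by
        rw [← sq_abs (a - a')]; exact pow_le_pow_left₀ (abs_nonneg _) h1 2
      have e2 : (b - b')^2 ≤ (q.2 - z.2)^2 := by
        rw [← sq_abs (b - b'), ← sq_abs (q.2 - z.2)]
        exact pow_le_pow_left₀ (abs_nonneg _) h2 2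
      linarith
    have hcs : b - γ*a ≤ S1 * T := by
      have step : b - γ*a ≤ |b - b'| + γ*|a' - a| := by
        have l1 : b - b' ≤ |b - b'| := le_abs_self _
        have l3 : γ*(a' - a) ≤ γ*|a' - a| := mul_le_mul_of_nonneg_left (le_abs_self _) hγ.le
        nlinarith [hc']
      have hu : |a' - a|^2 = (a - a')^2 := by rw [sq_abs]; ring
      have hv : |b - b'|^2 = (b - b')^2 := sq_abs _
      have cs2 : (|b - b'| + γ*|a' - a|)^2 ≤ (1 + γ^2) * ((a - a')^2 + (b - b')^2) := by
        nlinarith [sq_nonneg (|a' - a| - γ * |b - b'|), hu, hv]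
      have hs : S1 * T = Real.sqrt ((1 + γ^2) * ((a - a')^2 + (b - b')^2)) :=
        (Real.sqrt_mul (by positivity) _).symm
      rw [hs]
      calc b - γ*a ≤ |b - b'| + γ*|a' - a| := step
        _ = Real.sqrt ((|b - b'| + γ*|a' - a|)^2) := (Real.sqrt_sq (by positivity)).symm
        _ ≤ Real.sqrt ((1 + γ^2) * ((a - a')^2 + (b - b')^2)) := Real.sqrt_le_sqrt cs2
    have hsq : γ^2*(a^2 + b^2) ≤ (1 + 4*γ^2)*(b - γ*a)^2 := by
      have hf2 : 0 ≤ b*(1 + 3*γ^2) - 2*γ^3*a := by nlinarith [mul_nonneg hγ.le ha0]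
      nlinarith [mul_nonneg (sub_nonneg.2 hab.le) hf2]
    have hbγa : 0 ≤ b - γ*a := by nlinarith [mul_nonneg hγ.le ha0]
    have hγD : γ * Real.sqrt (a^2 + b^2) ≤ S2 * (b - γ*a) := by
      have hS2sq : S2^2 = 1 + 4*γ^2 := Real.sq_sqrt (by positivity)
      have hDsq : (Real.sqrt (a^2 + b^2))^2 = a^2 + b^2 := Real.sq_sqrt (by positivity)
      apply le_of_sq_le_sq'' _ (by positivity) (mul_nonneg hS2pos.le hbγa)
      rw [mul_pow, mul_pow, hS2sq, hDsq]
      exact hsq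
    have hstep : γ * Real.sqrt (a^2 + b^2) ≤ S1 * S2 * T := by
      calc γ * Real.sqrt (a^2 + b^2) ≤ S2 * (b - γ*a) := hγD
        _ ≤ S2 * (S1 * T) := mul_le_mul_of_nonneg_left hcs hS2pos.le
        _ = S1 * S2 * T := by ring
    have hρle : ρ ≤ T := by
      rw [hρ, hD, hsin, show Real.sqrt (a^2 + b^2) * (γ / (S1 * S2))
        = (γ * Real.sqrt (a^2 + b^2)) / (S1 * S2) by ring,
        div_le_iff₀ (by positivity)]
      linarith [hstep]
    linarith
end
end

section
/- Let (X,d) be a metric space and endow X×ℝ with the distance d̃((x,t),(y,s)) = sqrt(d(x,y)² + (t−s)²). Let μ be a locally finite Borel measure on X×ℝ, n ≥ 1 an integer, Σ ⊆ X×ℝ Borel, f̄: X → ℝ, A ⊆ X, and let Σ' ⊆ Σ be a Borel set with Σ' ⊆ {(x, f̄(x)) : x ∈ A} and with the restriction of f̄ to A continuous. Let γ > 0 and r₀ ∈ (0,1) satisfy Σ' ∩ B_{r₀}(p) ⊆ C_{2γ}(p) for every p ∈ Σ', and let j > 0 satisfy limsup_{r→0} μ(Σ ∩ B_r(p))/(ω_n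 rⁿ) ≤ j for every p ∈ Σ'. Set λ := sqrt(1+4γ²). Then for every p = (x, f̄(x)) ∈ Σ' one has limsup_{r→0} μ(Σ' ∩ (B_r(x)×ℝ))/(ω_n rⁿ) ≤ λⁿ·j, and consequently μ(Σ') ≤ (2λ)ⁿ·j·Hⁿ(π¹(Σ')), where π¹: X×ℝ → X is the projection and Hⁿ is the n-dimensional Hausdorff measure on X. -/
/-!
Near a point `p = (x, f̄ x)` of `Σ'`, continuity of `f̄` keeps the piece of `Σ'` over `B_r(x)`
inside `B_{r₀}(p)`, where the cone condition bounds its vertical spread by `2γ r`; hence that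
piece lies in the `ℓ²` ball `B_{λ r}(p)` and its mass is at most `λⁿ j ω_n rⁿ` asymptotically.
The image of `μ ⌞ Σ'` under the projection is then a measure on `X` with upper `n`-density at
most `ω_n λⁿ j` on `π¹(Σ')`. Any small set meeting the set of points where this density bound
holds below a fixed scale lies in a ball of essentially its own diameter around such a point, so
comparing with Hausdorff coverings gives `μ(Σ') ≤ ω_n λⁿ j μH[n](π¹ Σ') = (2λ)ⁿ j Hⁿ(π¹ Σ')`.
-/

open MeasureTheory Filter Set Metric Topology
open scoped ENNReal NNReal

noncomputable section

/-- The `n`-dimensional Hausdorff measure with the geometric normalization of the paper,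
`Hⁿ(E) = lim_δ inf { Σ_i ω_n (diam E_i / 2)ⁿ }`; it equals `(ω_n/2ⁿ)` times Mathlib's
`μH[n]` (which uses the gauge `diamⁿ`). -/
def hausdorffPaper (X : Type*) [EMetricSpace X] [MeasurableSpace X] [BorelSpace X]
    (n : ℕ) : Measure X :=
  ENNReal.ofReal (omegaN n / 2 ^ n) • μH[(n : ℝ)]

section

variable {X : Type*} [PseudoMetricSpace X] [MeasurableSpace X]
  (ν : Measure X) (n : ℕ) {c : ℝ≥0∞}

lemma measure_inter_le_mul_ediam_pow {F s : Set X} {R : ℝ} (hc : c ≠ ⊤)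
    (hF : ∀ x ∈ F, ∀ ρ ∈ Ioo 0 R, ν (ball x ρ) ≤ c * ENNReal.ofReal (ρ ^ n))
    (hs : ediam s < ENNReal.ofReal R) :
    ν (s ∩ F) ≤ c * ediam s ^ (n : ℝ) := by
  rcases (s ∩ F).eq_empty_or_nonempty with hempty | ⟨x, hxs, hxF⟩
  · simp [hempty]
  have hs_top : ediam s ≠ ⊤ := (hs.trans ENNReal.ofReal_lt_top).ne
  have hdR : diam s < R := by
    rwa [diam, ← ENNReal.ofReal_lt_ofReal_iff_of_nonneg ENNReal.toReal_nonneg,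
      ENNReal.ofReal_toReal hs_top]
  have hbound : ∀ᶠ ρ in 𝓝[>] diam s, ν (s ∩ F) ≤ c * ENNReal.ofReal (ρ ^ n) := by
    filter_upwards [Ioo_mem_nhdsGT hdR] with ρ hρ
    refine (measure_mono fun y hy => ?_).trans (hF x hxF ρ ⟨diam_nonneg.trans_lt hρ.1, hρ.2⟩)
    exact mem_ball.2 ((dist_le_diam_of_mem' hs_top hy.1 hxs).trans_lt hρ.1)
  have hlim : Tendsto (fun ρ : ℝ => c * ENNReal.ofReal (ρ ^ n)) (𝓝[>] diam s)
      (𝓝 (c * ENNReal.ofReal (diam s ^ n))) :=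
    have hcont : Continuous fun ρ : ℝ => ENNReal.ofReal (ρ ^ n) :=
      ENNReal.continuous_ofReal.comp (continuous_pow n)
    ENNReal.Tendsto.const_mul ((hcont.tendsto _).mono_left nhdsWithin_le_nhds) (.inr hc)
  -- letting `ρ ↓ diam s` costs no constant and also covers sets of diameter zero
  rw [ENNReal.rpow_natCast, ← ENNReal.ofReal_toReal hs_top, ← diam,
    ← ENNReal.ofReal_pow diam_nonneg]
  exact ge_of_tendsto hlim hbound

end

section DensityBound

variable {X : Type*} [MetricSpace X] [MeasurableSpace X] [BorelSpace X]
  (ν : Measure X) (n : ℕ) {c : ℝ≥0∞}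

lemma measure_le_mul_hausdorffMeasure_of_forall_ball_le {F : Set X} {R : ℝ} (hR : 0 < R)
    (hc₀ : c ≠ 0) (hc : c ≠ ⊤)
    (hF : ∀ x ∈ F, ∀ ρ ∈ Ioo 0 R, ν (ball x ρ) ≤ c * ENNReal.ofReal (ρ ^ n)) :
    ν F ≤ c * μH[(n : ℝ)] F := by
  have hle : OuterMeasure.restrict F ν.toOuterMeasure ≤
      OuterMeasure.mkMetric (c • fun d : ℝ≥0∞ => d ^ (n : ℝ)) := by
    refine OuterMeasure.le_mkMetric _ _ (ENNReal.ofReal (R / 2)) (by simp [hR]) fun s hs => ?_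
    rw [OuterMeasure.restrict_apply]
    exact measure_inter_le_mul_ediam_pow ν n hc hF
      (hs.trans_lt (ENNReal.ofReal_lt_ofReal_iff hR |>.2 (half_lt_self hR)))
  calc ν F = OuterMeasure.restrict F ν.toOuterMeasure F := by simp
    _ ≤ OuterMeasure.mkMetric (c • fun d : ℝ≥0∞ => d ^ (n : ℝ)) F := hle F
    _ = c * μH[(n : ℝ)] F := by
      rw [OuterMeasure.mkMetric_smul _ hc hc₀, smul_apply,
        OuterMeasure.coe_mkMetric, smul_eq_mul]
      rfl

lemma measure_le_mul_hausdorffMeasure_of_limsup_lt {E : Set X} (hc₀ : c ≠ 0) (hc : c ≠ ⊤)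
    (hE : ∀ x ∈ E, limsup (fun r : ℝ => ν (ball x r) / ENNReal.ofReal (r ^ n)) (𝓝[>] 0) < c) :
    ν E ≤ c * μH[(n : ℝ)] E := by
  set F : ℕ → Set X := fun k =>
    {x | x ∈ E ∧ ∀ ρ ∈ Ioo 0 (1 / ((k : ℝ) + 1)), ν (ball x ρ) ≤ c * ENNReal.ofReal (ρ ^ n)}
  have hF_mono : Monotone F := fun k l hkl x ⟨hxE, hx⟩ =>
    ⟨hxE, fun ρ hρ => hx ρ ⟨hρ.1, hρ.2.trans_le (Nat.one_div_le_one_div hkl)⟩⟩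
  have hE_sub : E ⊆ ⋃ k, F k := by
    intro x hx
    obtain ⟨u, hu, hsub⟩ :=
      mem_nhdsGT_iff_exists_Ioc_subset.1 (eventually_lt_of_limsup_lt (hE x hx))
    obtain ⟨k, hk⟩ := exists_nat_one_div_lt (mem_Ioi.1 hu)
    refine mem_iUnion.2 ⟨k, hx, fun ρ hρ => ?_⟩
    have hρn : ENNReal.ofReal (ρ ^ n) ≠ 0 := by simp [hρ.1]
    exact (ENNReal.div_le_iff_le_mul (.inl hρn) (.inl ENNReal.ofReal_ne_top)).1
      (hsub ⟨hρ.1, hρ.2.le.trans hk.le⟩).le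
  calc ν E ≤ ⨆ k, ν (F k) := (measure_mono hE_sub).trans_eq hF_mono.measure_iUnion
    _ ≤ c * μH[(n : ℝ)] E := iSup_le fun k =>
      (measure_le_mul_hausdorffMeasure_of_forall_ball_le ν n Nat.one_div_pos_of_nat hc₀ hc
        fun x hx => hx.2).trans (by gcongr; exact fun x hx => hx.1)

lemma measure_le_mul_hausdorffMeasure_of_limsup_le {E : Set X} (hc₀ : c ≠ 0) (hc : c ≠ ⊤)
    (hE : ∀ x ∈ E, limsup (fun r : ℝ => ν (ball x r) / ENNReal.ofReal (r ^ n)) (𝓝[>] 0) ≤ c) :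
    ν E ≤ c * μH[(n : ℝ)] E := by
  have : (𝓝[>] c).NeBot := nhdsGT_neBot_of_exists_gt ⟨⊤, hc.lt_top⟩
  have hlim : Tendsto (fun c' => c' * μH[(n : ℝ)] E) (𝓝[>] c) (𝓝 (c * μH[(n : ℝ)] E)) :=
    ENNReal.Tendsto.mul_const (tendsto_nhdsWithin_of_tendsto_nhds tendsto_id) (.inl hc₀)
  refine ge_of_tendsto hlim ?_
  filter_upwards [self_mem_nhdsWithin, nhdsWithin_le_nhds (Iio_mem_nhds hc.lt_top)]
    with c' hc' hc'_top
  exact measure_le_mul_hausdorffMeasure_of_limsup_lt ν n (pos_of_gt hc').ne' hc'_top.ne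
    fun x hx => (hE x hx).trans_lt hc'

end DensityBound

section GraphGeometry

variable {X : Type*} [PseudoMetricSpace X]

lemma dist2_le_dist_add_abs (p q : X × ℝ) : dist2 p q ≤ dist p.1 q.1 + |p.2 - q.2| := by
  rw [dist2, Real.sqrt_le_left (by positivity), ← sq_abs (p.2 - q.2)]
  nlinarith [dist_nonneg (x := p.1) (y := q.1), abs_nonneg (p.2 - q.2)]

lemma dist2_lt_of_mem_cone {κ r : ℝ} {p q : X × ℝ} (hq : q ∈ cone κ p)
    (hr : dist q.1 p.1 < r) : dist2 p q < Real.sqrt (1 + κ ^ 2) * r := by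
  have hsq : (q.2 - p.2) ^ 2 ≤ (κ * dist q.1 p.1) ^ 2 :=
    sq_le_sq' (abs_le.1 hq).1 (abs_le.1 hq).2
  calc dist2 p q ≤ Real.sqrt ((1 + κ ^ 2) * dist q.1 p.1 ^ 2) := by
        rw [dist2, dist_comm p.1, ← neg_sub q.2, neg_sq]
        exact Real.sqrt_le_sqrt (by nlinarith)
    _ = Real.sqrt (1 + κ ^ 2) * dist q.1 p.1 := by
        rw [Real.sqrt_mul (by positivity), Real.sqrt_sq dist_nonneg]
    _ < Real.sqrt (1 + κ ^ 2) * r := mul_lt_mul_of_pos_left hr (by positivity)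

lemma eventually_graph_inter_cylinder_subset_ball2 {f : X → ℝ} {A : Set X} {G : Set (X × ℝ)}
    (hG : G ⊆ {q | q.1 ∈ A ∧ q.2 = f q.1}) {p : X × ℝ} (hp : p ∈ G)
    (hf : ContinuousWithinAt f A p.1) {ρ : ℝ} (hρ : 0 < ρ) :
    ∀ᶠ r in 𝓝[>] 0, G ∩ (ball p.1 r ×ˢ univ) ⊆ ball2 p ρ := by
  obtain ⟨δ, hδ, hfδ⟩ := Metric.continuousWithinAt_iff.1 hf (ρ / 2) (half_pos hρ)
  filter_upwards [Ioo_mem_nhdsGT (lt_min hδ (half_pos hρ))] with r hr q ⟨hqG, hq⟩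
  have hqx : dist q.1 p.1 < r := mem_ball.1 (mem_prod.1 hq).1
  obtain ⟨hqA, hqf⟩ := hG hqG
  have hqt : |p.2 - q.2| < ρ / 2 := by
    rw [(hG hp).2, hqf, abs_sub_comm, ← Real.dist_eq]
    exact hfδ hqA (hqx.trans (hr.2.trans_le (min_le_left _ _)))
  have hqx' : dist p.1 q.1 < ρ / 2 := by
    rw [dist_comm]; exact hqx.trans (hr.2.trans_le (min_le_right _ _))
  exact (dist2_le_dist_add_abs p q).trans_lt (by linarith)

end GraphGeometry

lemma map_const_mul_nhdsGT_zero {c : ℝ} (hc : 0 < c) : map (c * ·) (𝓝[>] (0 : ℝ)) = 𝓝[>] 0 := by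
  conv_lhs => rw [← comap_mulLeft_nhdsGT_zero hc]
  exact map_comap_of_surjective (mul_left_surjective₀ hc.ne') _

lemma limsup_div_ofReal_pow_le_of_le_comp_mul {u v : ℝ → ℝ≥0∞} {n : ℕ} {a c : ℝ}
    (hc : 0 < c) (huv : ∀ᶠ r in 𝓝[>] 0, u r ≤ v (c * r)) :
    limsup (fun r => u r / ENNReal.ofReal (a * r ^ n)) (𝓝[>] 0) ≤
      ENNReal.ofReal (c ^ n) * limsup (fun r => v r / ENNReal.ofReal (a * r ^ n)) (𝓝[>] 0) := by
  set g : ℝ → ℝ≥0∞ := fun r => v r / ENNReal.ofReal (a * r ^ n)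
  have hg : limsup (g ∘ (c * ·)) (𝓝[>] 0) = limsup g (𝓝[>] 0) := by
    rw [limsup_comp, map_const_mul_nhdsGT_zero hc]
  rw [← hg, ← ENNReal.limsup_const_mul_of_ne_top ENNReal.ofReal_ne_top]
  refine limsup_le_limsup ?_
  filter_upwards [huv] with r hr
  have hcn : ENNReal.ofReal (c ^ n) ≠ 0 := by simp [pow_pos hc]
  have hscale : ENNReal.ofReal (c ^ n) * ENNReal.ofReal (a * r ^ n) =
      ENNReal.ofReal (a * (c * r) ^ n) := by
    rw [← ENNReal.ofReal_mul (by positivity)]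
    ring_nf
  calc u r / ENNReal.ofReal (a * r ^ n)
      = ENNReal.ofReal (c ^ n) * u r / (ENNReal.ofReal (c ^ n) * ENNReal.ofReal (a * r ^ n)) :=
        (ENNReal.mul_div_mul_left _ _ hcn ENNReal.ofReal_ne_top).symm
    _ ≤ ENNReal.ofReal (c ^ n) * v (c * r) / ENNReal.ofReal (a * (c * r) ^ n) := by
        rw [hscale]
        gcongr
    _ = ENNReal.ofReal (c ^ n) * g (c * r) := mul_div_assoc _ _ _

lemma limsup_div_ofReal_pow_eq_mul (u : ℝ → ℝ≥0∞) (n : ℕ) {a : ℝ} (ha : 0 < a) :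
    limsup (fun r => u r / ENNReal.ofReal (r ^ n)) (𝓝[>] 0) =
      ENNReal.ofReal a * limsup (fun r => u r / ENNReal.ofReal (a * r ^ n)) (𝓝[>] 0) := by
  rw [← ENNReal.limsup_const_mul_of_ne_top ENNReal.ofReal_ne_top]
  congr with r
  rw [ENNReal.ofReal_mul ha.le, ← mul_div_assoc,
    ENNReal.mul_div_mul_left _ _ (by simp [ha]) ENNReal.ofReal_ne_top]

lemma measure_le_map_restrict_image {α β : Type*} [MeasurableSpace α] [MeasurableSpace β]
    (μ : Measure α) {f : α → β} (hf : Measurable f) (s : Set α) :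
    μ s ≤ (μ.restrict s).map f (f '' s) :=
  calc μ s = μ.restrict s s := (Measure.restrict_apply_self μ s).symm
    _ ≤ μ.restrict s (f ⁻¹' (f '' s)) := measure_mono (subset_preimage_image f s)
    _ ≤ (μ.restrict s).map f (f '' s) := Measure.le_map_apply hf.aemeasurable _

lemma map_fst_restrict_apply_ball {X : Type*} [PseudoMetricSpace X] [MeasurableSpace X]
    [OpensMeasurableSpace X] (μ : Measure (X × ℝ)) (S : Set (X × ℝ)) (x : X) (r : ℝ) :
    (μ.restrict S).map Prod.fst (ball x r) = μ (S ∩ (ball x r ×ˢ univ)) := by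
  rw [Measure.map_apply measurable_fst measurableSet_ball,
    Measure.restrict_apply (measurable_fst measurableSet_ball), prod_univ, inter_comm]

lemma limsup_graph_cylinder_density_le {X : Type*} [PseudoMetricSpace X] [MeasurableSpace X]
    (μ : Measure (X × ℝ)) {S S' : Set (X × ℝ)} (hS'S : S' ⊆ S) {f : X → ℝ} {A : Set X}
    (hgraph : S' ⊆ {q | q.1 ∈ A ∧ q.2 = f q.1}) (hf : ContinuousOn f A) {κ r₀ : ℝ}
    (hr₀ : 0 < r₀) (hcone : ∀ p ∈ S', S' ∩ ball2 p r₀ ⊆ cone κ p) (n : ℕ) (a : ℝ)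
    {p : X × ℝ} (hp : p ∈ S') :
    limsup (fun r => μ (S' ∩ (ball p.1 r ×ˢ univ)) / ENNReal.ofReal (a * r ^ n)) (𝓝[>] 0) ≤
      ENNReal.ofReal (Real.sqrt (1 + κ ^ 2) ^ n) *
        limsup (fun r => μ (S ∩ ball2 p r) / ENNReal.ofReal (a * r ^ n)) (𝓝[>] 0) := by
  refine limsup_div_ofReal_pow_le_of_le_comp_mul (Real.sqrt_pos.2 (by positivity)) ?_
  filter_upwards [eventually_graph_inter_cylinder_subset_ball2 hgraph hp
    (hf p.1 (hgraph hp).1) hr₀] with r hr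
  refine measure_mono fun q hq => ⟨hS'S hq.1, ?_⟩
  exact dist2_lt_of_mem_cone (hcone p hp ⟨hq.1, hr hq⟩) (mem_ball.1 (mem_prod.1 hq.2).1)

lemma omegaN_pos (k : ℕ) : 0 < omegaN k :=
  div_pos (Real.rpow_pos_of_pos Real.pi_pos _) (Real.Gamma_pos_of_pos (by positivity))

theorem statement11_general
    {X : Type*} [MetricSpace X] [MeasurableSpace X] [BorelSpace X]
    (μ : Measure (X × ℝ))
    (n : ℕ)
    (S : Set (X × ℝ))
    (fbar : X → ℝ) (A : Set X)
    (S' : Set (X × ℝ)) (hS'S : S' ⊆ S)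
    (hgraph : S' ⊆ {p : X × ℝ | p.1 ∈ A ∧ p.2 = fbar p.1})
    (hcont : ContinuousOn fbar A)
    (γ : ℝ) (r₀ : ℝ) (hr₀ : r₀ ∈ Set.Ioo (0 : ℝ) 1)
    (hcone : ∀ p ∈ S', S' ∩ ball2 p r₀ ⊆ cone (2 * γ) p)
    (j : ℝ) (hj : 0 < j)
    (hup : ∀ p ∈ S',
      limsup (fun r : ℝ => μ (S ∩ ball2 p r) / ENNReal.ofReal (omegaN n * r ^ n))
          (𝓝[>] (0 : ℝ)) ≤ ENNReal.ofReal j)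
    (lam : ℝ) (hlam : lam = Real.sqrt (1 + 4 * γ ^ 2)) :
    (∀ p ∈ S',
      limsup
          (fun r : ℝ =>
            μ (S' ∩ (Metric.ball p.1 r ×ˢ Set.univ)) / ENNReal.ofReal (omegaN n * r ^ n))
          (𝓝[>] (0 : ℝ)) ≤ ENNReal.ofReal (lam ^ n * j)) ∧
    μ S' ≤ ENNReal.ofReal ((2 * lam) ^ n * j) * hausdorffPaper X n (Prod.fst '' S') := by
  have hlam_pos : 0 < lam := hlam ▸ Real.sqrt_pos.2 (by positivity)
  have hcyl : ∀ p ∈ S', limsup (fun r : ℝ => μ (S' ∩ (ball p.1 r ×ˢ univ)) /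
      ENNReal.ofReal (omegaN n * r ^ n)) (𝓝[>] 0) ≤ ENNReal.ofReal (lam ^ n * j) := by
    intro p hp
    have h := limsup_graph_cylinder_density_le μ hS'S hgraph hcont hr₀.1 hcone n (omegaN n) hp
    rw [mul_pow, show (2 : ℝ) ^ 2 = 4 by norm_num, ← hlam] at h
    rw [ENNReal.ofReal_mul (by positivity)]
    exact h.trans (by gcongr; exact hup p hp)
  refine ⟨hcyl, ?_⟩
  set ν := (μ.restrict S').map Prod.fst
  have hν : ∀ x ∈ Prod.fst '' S', limsup (fun r : ℝ => ν (ball x r) / ENNReal.ofReal (r ^ n))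
      (𝓝[>] 0) ≤ ENNReal.ofReal (omegaN n * (lam ^ n * j)) := by
    rintro _ ⟨p, hp, rfl⟩
    simp_rw [ν, map_fst_restrict_apply_ball, limsup_div_ofReal_pow_eq_mul _ n (omegaN_pos n)]
    exact (mul_le_mul_right (hcyl p hp) _).trans_eq (ENNReal.ofReal_mul (omegaN_pos n).le).symm
  have hc₀ : ENNReal.ofReal (omegaN n * (lam ^ n * j)) ≠ 0 := by
    simp [omegaN_pos n, pow_pos hlam_pos n, hj]
  calc μ S' ≤ ν (Prod.fst '' S') := measure_le_map_restrict_image μ measurable_fst S'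
    _ ≤ ENNReal.ofReal (omegaN n * (lam ^ n * j)) * μH[(n : ℝ)] (Prod.fst '' S') :=
      measure_le_mul_hausdorffMeasure_of_limsup_le ν n hc₀ ENNReal.ofReal_ne_top hν
    _ = ENNReal.ofReal ((2 * lam) ^ n * j) * hausdorffPaper X n (Prod.fst '' S') := by
      rw [hausdorffPaper, Measure.smul_apply, smul_eq_mul, ← mul_assoc (ENNReal.ofReal _),
        ← ENNReal.ofReal_mul (by positivity)]
      congr 2
      field_simp
      ring

/-- Let `μ` be a locally finite Borel measure on `X × ℝ` (ℓ² product
distance), `Σ` Borel, `Σ' ⊆ Σ` Borel contained in the graph of `f̄` over `A`, with `f̄`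
continuous on `A`. Assume the cone condition `Σ' ∩ B_{r₀}(p) ⊆ C_{2γ}(p)` for `p ∈ Σ'` and
the density bound `limsup_{r→0} μ(Σ ∩ B_r(p))/(ω_n rⁿ) ≤ j` for `p ∈ Σ'`. Then, with
`λ = sqrt(1+4γ²)`, for every `p = (x,f̄(x)) ∈ Σ'` one has
`limsup_{r→0} μ(Σ' ∩ (B_r(x)×ℝ))/(ω_n rⁿ) ≤ λⁿ·j`, and consequently
`μ(Σ') ≤ (2λ)ⁿ·j·Hⁿ(π¹(Σ'))`. -/
theorem statement11
    {X : Type*} [MetricSpace X] [MeasurableSpace X] [BorelSpace X]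
    (μ : Measure (X × ℝ))
    (hloc : ∀ p : X × ℝ, ∃ r : ℝ, 0 < r ∧ μ (ball2 p r) < ⊤)
    (n : ℕ) (hn : 1 ≤ n)
    (S : Set (X × ℝ)) (hS : MeasurableSet S)
    (fbar : X → ℝ) (A : Set X)
    (S' : Set (X × ℝ)) (hS' : MeasurableSet S') (hS'S : S' ⊆ S)
    (hgraph : S' ⊆ {p : X × ℝ | p.1 ∈ A ∧ p.2 = fbar p.1})
    (hcont : ContinuousOn fbar A)
    (γ : ℝ) (hγ : 0 < γ) (r₀ : ℝ) (hr₀ : r₀ ∈ Set.Ioo (0 : ℝ) 1)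
    (hcone : ∀ p ∈ S', S' ∩ ball2 p r₀ ⊆ cone (2 * γ) p)
    (j : ℝ) (hj : 0 < j)
    (hup : ∀ p ∈ S',
      limsup (fun r : ℝ => μ (S ∩ ball2 p r) / ENNReal.ofReal (omegaN n * r ^ n))
          (𝓝[>] (0 : ℝ)) ≤ ENNReal.ofReal j)
    (lam : ℝ) (hlam : lam = Real.sqrt (1 + 4 * γ ^ 2)) :
    (∀ p ∈ S',
      limsup
          (fun r : ℝ =>
            μ (S' ∩ (Metric.ball p.1 r ×ˢ Set.univ)) / ENNReal.ofReal (omegaN n * r ^ n))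
          (𝓝[>] (0 : ℝ)) ≤ ENNReal.ofReal (lam ^ n * j)) ∧
    μ S' ≤ ENNReal.ofReal ((2 * lam) ^ n * j) * hausdorffPaper X n (Prod.fst '' S') :=
  statement11_general μ n S fbar A S' hS'S hgraph hcont γ r₀ hr₀ hcone j hj hup lam hlam

end
end

section
/- Let (X,d_X) and (Y,d_Y) be metric spaces, let n ≥ 1 be an integer, let F: X → Y be any map, and let S ⊆ X satisfy Hⁿ(S) < ∞, where Hⁿ is the n-dimensional Hausdorff (outer) measure on X. Suppose there exist ε > 0 and r̄ > 0 such that H^n_∞(F(S ∩ B_r(p))) ≤ ε·rⁿ for every p ∈ S and every r ∈ (0, r̄), where H^n_∞ denotes the n-dimensional Hausdorff content on Y. Then H^n_∞(F(S)) ≤ 2ⁿ·ω_n^{−1}·ε·Hⁿ(S). -/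
open MeasureTheory Filter Set Metric Topology
open scoped ENNReal NNReal

noncomputable section

/-- The `n`-dimensional Hausdorff content,
`H^n_∞(A) = inf { Σ_i ω_n (diam E_i / 2)ⁿ : A ⊆ ⋃_i E_i }`. -/
def hContent {Y : Type*} [PseudoEMetricSpace Y] (n : ℕ) (A : Set Y) : ℝ≥0∞ :=
  ⨅ (E : ℕ → Set Y) (_ : A ⊆ ⋃ i, E i),
    ∑' i, ENNReal.ofReal (omegaN n) * (EMetric.diam (E i) / 2) ^ n

lemma hausdorffPaper_apply {X : Type*} [EMetricSpace X] [MeasurableSpace X] [BorelSpace X]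
    (n : ℕ) (S : Set X) :
    hausdorffPaper X n S = ENNReal.ofReal (omegaN n / 2 ^ n) * μH[(n : ℝ)] S :=
  rfl

section Content

variable {Y : Type*} [PseudoEMetricSpace Y]

def hContentOuterMeasure (n : ℕ) (hn : n ≠ 0) : OuterMeasure Y :=
  OuterMeasure.ofFunction (fun E => ENNReal.ofReal (omegaN n) * (ediam E / 2) ^ n)
    (by simp [hn])

lemma hContentOuterMeasure_apply (n : ℕ) (hn : n ≠ 0) (A : Set Y) :
    hContentOuterMeasure n hn A = hContent n A :=
  rfl

end Content

namespace MeasureTheory.OuterMeasure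

/-- The mass distribution principle for Hausdorff measures. -/
theorem le_mul_hausdorffMeasure {X : Type*} [EMetricSpace X] [MeasurableSpace X] [BorelSpace X]
    (μ : OuterMeasure X) (d : ℝ) {c r : ℝ≥0∞} (hc : c ≠ ∞) (hc₀ : c ≠ 0)
    (hr : 0 < r) (h : ∀ s, ediam s ≤ r → μ s ≤ c * ediam s ^ d) (s : Set X) :
    μ s ≤ c * μH[d] s := by
  have hle := le_mkMetric (c • fun r => r ^ d) μ r hr h
  rw [mkMetric_smul _ hc hc₀] at hle
  simpa only [smul_apply, smul_eq_mul, coe_mkMetric, Measure.hausdorffMeasure]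
    using hle s

lemma image_inter_le_of_ball {X Y : Type*} [PseudoMetricSpace X]
    (μ : OuterMeasure Y) (F : X → Y) (S : Set X) (n : ℕ) (ε rbar : ℝ)
    (h : ∀ p ∈ S, ∀ r : ℝ, 0 < r → r < rbar →
      μ (F '' (S ∩ ball p r)) ≤ ENNReal.ofReal (ε * r ^ n))
    {s : Set X} (hs : ediam s < ENNReal.ofReal rbar) :
    μ (F '' (s ∩ S)) ≤ ENNReal.ofReal ε * ediam s ^ n := by
  rcases (s ∩ S).eq_empty_or_nonempty with hempty | ⟨p, hps, hpS⟩
  · simp [hempty]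
  set d := (ediam s).toReal
  have hd₀ : 0 ≤ d := ENNReal.toReal_nonneg
  have hd : ediam s = ENNReal.ofReal d := (ENNReal.ofReal_toReal hs.ne_top).symm
  have hdr : d < rbar := by
    rw [hd] at hs
    exact (ENNReal.ofReal_lt_ofReal_iff'.1 hs).1
  have hlim : Tendsto (fun ρ : ℝ => ENNReal.ofReal (ε * ρ ^ n)) (𝓝[>] d)
      (𝓝 (ENNReal.ofReal (ε * d ^ n))) :=
    ((ENNReal.continuous_ofReal.comp (continuous_const.mul (continuous_pow n))).tendsto d).mono_left
      nhdsWithin_le_nhds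
  have hbound : ∀ᶠ ρ in 𝓝[>] d, μ (F '' (s ∩ S)) ≤ ENNReal.ofReal (ε * ρ ^ n) := by
    filter_upwards [self_mem_nhdsWithin, nhdsWithin_le_nhds (gt_mem_nhds hdr)]
      with ρ (hdρ : d < ρ) hρr
    have hsub : s ∩ S ⊆ S ∩ ball p ρ := fun x ⟨hxs, hxS⟩ => by
      refine ⟨hxS, ?_⟩
      rw [mem_ball, ← edist_lt_ofReal]
      calc edist x p ≤ ediam s := edist_le_ediam_of_mem hxs hps
        _ < ENNReal.ofReal ρ := by rwa [hd, ENNReal.ofReal_lt_ofReal_iff (hd₀.trans_lt hdρ)]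
    exact (μ.mono (image_mono hsub)).trans (h p hpS ρ (hd₀.trans_lt hdρ) hρr)
  calc μ (F '' (s ∩ S)) ≤ ENNReal.ofReal (ε * d ^ n) := ge_of_tendsto hlim hbound
    _ = ENNReal.ofReal ε * ediam s ^ n := by
      rw [ENNReal.ofReal_mul' (by positivity), ENNReal.ofReal_pow hd₀, hd]

end MeasureTheory.OuterMeasure

theorem statement12_general
    {X Y : Type*} [MetricSpace X] [MeasurableSpace X] [BorelSpace X] [MetricSpace Y]
    (n : ℕ) (hn : 1 ≤ n) (F : X → Y) (S : Set X)
    (ε rbar : ℝ) (hε : 0 < ε) (hrbar : 0 < rbar)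
    (h : ∀ p ∈ S, ∀ r : ℝ, 0 < r → r < rbar →
      hContent n (F '' (S ∩ Metric.ball p r)) ≤ ENNReal.ofReal (ε * r ^ n)) :
    hContent n (F '' S) ≤
      ENNReal.ofReal (2 ^ n * (omegaN n)⁻¹ * ε) * hausdorffPaper X n S := by
  set μ := hContentOuterMeasure (Y := Y) n (by omega)
  set ν := OuterMeasure.restrict S (OuterMeasure.comap F μ)
  have hν : ∀ s : Set X, ν s = μ (F '' (s ∩ S)) := fun s => by
    simp only [ν, OuterMeasure.restrict_apply, OuterMeasure.comap_apply]
  have hsmall : ∀ s, ediam s ≤ ENNReal.ofReal (rbar / 2) →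
      ν s ≤ ENNReal.ofReal ε * ediam s ^ (n : ℝ) := fun s hs => by
    rw [hν, ENNReal.rpow_natCast]
    refine μ.image_inter_le_of_ball F S n ε rbar h (hs.trans_lt ?_)
    exact (ENNReal.ofReal_lt_ofReal_iff hrbar).2 (half_lt_self hrbar)
  have hmain := ν.le_mul_hausdorffMeasure n ENNReal.ofReal_ne_top
    (ENNReal.ofReal_pos.2 hε).ne' (ENNReal.ofReal_pos.2 (half_pos hrbar)) hsmall S
  rw [hν, inter_self] at hmain
  calc hContent n (F '' S) = μ (F '' S) := (hContentOuterMeasure_apply n _ _).symm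
    _ ≤ ENNReal.ofReal ε * μH[(n : ℝ)] S := hmain
    _ = ENNReal.ofReal (2 ^ n * (omegaN n)⁻¹ * ε) * hausdorffPaper X n S := by
      have hω := omegaN_pos n
      rw [hausdorffPaper_apply, ← mul_assoc, ← ENNReal.ofReal_mul' (by positivity)]
      congr 2
      field_simp

/-- Let `F : X → Y` be any map and `S ⊆ X` with `Hⁿ(S) < ∞`. If there
are `ε > 0` and `r̄ > 0` such that `H^n_∞(F(S ∩ B_r(p))) ≤ ε·rⁿ` for every `p ∈ S` and
`r ∈ (0,r̄)`, then `H^n_∞(F(S)) ≤ 2ⁿ·ω_n⁻¹·ε·Hⁿ(S)`. -/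
theorem statement12
    {X Y : Type*} [MetricSpace X] [MeasurableSpace X] [BorelSpace X] [MetricSpace Y]
    (n : ℕ) (hn : 1 ≤ n) (F : X → Y) (S : Set X)
    (hSfin : hausdorffPaper X n S < ⊤)
    (ε rbar : ℝ) (hε : 0 < ε) (hrbar : 0 < rbar)
    (h : ∀ p ∈ S, ∀ r : ℝ, 0 < r → r < rbar →
      hContent n (F '' (S ∩ Metric.ball p r)) ≤ ENNReal.ofReal (ε * r ^ n)) :
    hContent n (F '' S) ≤
      ENNReal.ofReal (2 ^ n * (omegaN n)⁻¹ * ε) * hausdorffPaper X n S :=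
  statement12_general n hn F S ε rbar hε hrbar h

end
end

section
/- Let (X,d_X) and (Y,d_Y) be metric spaces, let n ≥ 1 be an integer, let F: X → Y be any map, and let S ⊆ X satisfy Hⁿ(S) < ∞, where Hⁿ is the n-dimensional Hausdorff (outer) measure. Suppose S = ⋃_{j∈ℕ} S_j, where for every j ∈ ℕ and every ε > 0 there exists r̄ > 0 such that H^n_∞(F(S ∩ B_r(p))) ≤ ε·rⁿ for every p ∈ S_j and every r ∈ (0, r̄), with H^n_∞ the n-dimensional Hausdorff content on Y. Then Hⁿ(F(S)) = 0. -/
open MeasureTheory Filter Set Metric Topology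
open scoped ENNReal NNReal

noncomputable section

lemma ofReal_omegaN_div_two_pow_ne_zero (n : ℕ) : ENNReal.ofReal (omegaN n / 2 ^ n) ≠ 0 :=
  (ENNReal.ofReal_pos.2 (div_pos (omegaN_pos n) (by positivity))).ne'

lemma iSup_nonempty_ediam_rpow {X : Type*} [PseudoEMetricSpace X] {d : ℝ} (hd : 0 < d)
    (s : Set X) : (⨆ _ : s.Nonempty, ediam s ^ d) = ediam s ^ d := by
  rcases s.eq_empty_or_nonempty with rfl | hs
  · simp [ENNReal.zero_rpow_of_pos hd]
  · exact iSup_pos hs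

section HausdorffMeasure

variable {X : Type*} [EMetricSpace X] [MeasurableSpace X] [BorelSpace X]

lemma exists_cover_tsum_ediam_rpow_lt {d : ℝ} (hd : 0 < d) {S : Set X} {c r : ℝ≥0∞}
    (hS : μH[d] S < c) (hr : 0 < r) :
    ∃ E : ℕ → Set X, S ⊆ ⋃ i, E i ∧ (∀ i, ediam (E i) ≤ r) ∧ ∑' i, ediam (E i) ^ d < c := by
  rw [Measure.hausdorffMeasure_apply] at hS
  obtain ⟨E, hcov, hdiam, hsum⟩ : ∃ E : ℕ → Set X, S ⊆ ⋃ i, E i ∧ (∀ i, ediam (E i) ≤ r) ∧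
      ∑' i, ⨆ _ : (E i).Nonempty, ediam (E i) ^ d < c := by
    simpa only [iInf_lt_iff, exists_prop] using (le_iSup₂ r hr).trans_lt hS
  exact ⟨E, hcov, hdiam, by simpa only [iSup_nonempty_ediam_rpow hd] using hsum⟩

lemma hausdorffMeasure_eq_zero_of_forall_exists_cover {d : ℝ} (hd : 0 < d) {A : Set X}
    (h : ∀ η : ℝ≥0∞, 0 < η → ∃ t : ℕ → Set X, A ⊆ ⋃ i, t i ∧ ∑' i, ediam (t i) ^ d < η) :
    μH[d] A = 0 := by
  rw [Measure.hausdorffMeasure_apply, ← nonpos_iff_eq_zero]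
  refine iSup₂_le fun r hr => le_of_forall_gt_imp_ge_of_dense fun η hη => ?_
  obtain ⟨t, hAt, hsum⟩ := h (min η (r ^ d)) (lt_min hη (ENNReal.rpow_pos_of_nonneg hr hd.le))
  have hdiam (i : ℕ) : ediam (t i) ≤ r :=
    ((ENNReal.rpow_lt_rpow_iff hd).1
      ((ENNReal.le_tsum i).trans_lt (hsum.trans_le (min_le_right _ _)))).le
  refine iInf₂_le_of_le t hAt (iInf_le_of_le hdiam ?_)
  simpa only [iSup_nonempty_ediam_rpow hd] using (hsum.trans_le (min_le_left _ _)).le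

end HausdorffMeasure

section HausdorffContent

variable {Y : Type*} [PseudoEMetricSpace Y] {n : ℕ}

lemma hContent_def (A : Set Y) :
    hContent n A = ⨅ (E : ℕ → Set Y) (_ : A ⊆ ⋃ i, E i),
      ∑' i, ENNReal.ofReal (omegaN n) * (ediam (E i) / 2) ^ n :=
  rfl

-- Needs `n ≠ 0`: the gauge of `∅` is `ω₀ * 0 ^ 0 = ω₀`, so `hContent 0` is not an outer measure.
lemma hContent_eq_ofFunction (hn : n ≠ 0) (A : Set Y) :
    hContent n A = OuterMeasure.ofFunction
      (fun s => ENNReal.ofReal (omegaN n) * (ediam s / 2) ^ n) (by simp [hn]) A := by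
  rw [OuterMeasure.ofFunction_apply]
  rfl

lemma hContent_mono {A B : Set Y} (h : A ⊆ B) : hContent n A ≤ hContent n B :=
  iInf_mono fun _ => iInf_mono' fun hB => ⟨h.trans hB, le_rfl⟩

lemma hContent_iUnion_le (hn : n ≠ 0) (A : ℕ → Set Y) :
    hContent n (⋃ i, A i) ≤ ∑' i, hContent n (A i) := by
  simp only [hContent_eq_ofFunction hn]
  exact measure_iUnion_le A

lemma hContent_eq_zero_of_subsingleton (hn : n ≠ 0) {A : Set Y} (hA : A.Subsingleton) :
    hContent n A = 0 := by
  rw [hContent_eq_ofFunction hn]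
  refine nonpos_iff_eq_zero.1 ((OuterMeasure.ofFunction_le A).trans_eq ?_)
  simp [ediam_subsingleton hA, hn]

lemma ofReal_omegaN_mul_ediam_div_two_pow (s : Set Y) :
    ENNReal.ofReal (omegaN n) * (ediam s / 2) ^ n
      = ENNReal.ofReal (omegaN n / 2 ^ n) * ediam s ^ (n : ℝ) := by
  rw [ENNReal.rpow_natCast, ENNReal.ofReal_div_of_pos (by positivity),
    ENNReal.ofReal_pow zero_le_two, ENNReal.ofReal_ofNat, div_eq_mul_inv, div_eq_mul_inv,
    mul_pow, ENNReal.inv_pow]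
  ring

end HausdorffContent

lemma hausdorffMeasure_eq_zero_of_hContent_eq_zero {Y : Type*} [EMetricSpace Y]
    [MeasurableSpace Y] [BorelSpace Y] {n : ℕ} (hn : n ≠ 0) {A : Set Y}
    (hA : hContent n A = 0) : μH[(n : ℝ)] A = 0 := by
  have hc := ofReal_omegaN_div_two_pow_ne_zero n
  refine hausdorffMeasure_eq_zero_of_forall_exists_cover (by positivity) fun η hη => ?_
  have hlt : hContent n A < ENNReal.ofReal (omegaN n / 2 ^ n) * η :=
    hA ▸ ENNReal.mul_pos hc hη.ne'
  rw [hContent_def] at hlt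
  simp only [iInf_lt_iff, exists_prop, ofReal_omegaN_mul_ediam_div_two_pow,
    ENNReal.tsum_mul_left, ENNReal.mul_lt_mul_iff_right hc ENNReal.ofReal_ne_top] at hlt
  exact hlt

section ImageContent

variable {X Y : Type*} [MetricSpace X] [PseudoEMetricSpace Y] {n : ℕ} {F : X → Y} {S T : Set X}

lemma hContent_image_inter_le {E : Set X} {ε rbar : ℝ} (hn : n ≠ 0)
    (hball : ∀ p ∈ T, ∀ r : ℝ, 0 < r → r < rbar →
      hContent n (F '' (S ∩ ball p r)) ≤ ENNReal.ofReal (ε * r ^ n))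
    (hE : 2 * ediam E < ENNReal.ofReal rbar) :
    hContent n (F '' (S ∩ T ∩ E)) ≤ ENNReal.ofReal ε * (2 * ediam E) ^ n := by
  rcases (S ∩ T ∩ E).eq_empty_or_nonempty with hempty | ⟨p, ⟨hpS, hpT⟩, hpE⟩
  · rw [hempty, image_empty, hContent_eq_zero_of_subsingleton hn subsingleton_empty]
    exact zero_le
  rcases eq_or_ne (ediam E) 0 with h0 | h0
  · have hsub : (F '' (S ∩ T ∩ E)).Subsingleton :=
      ((ediam_eq_zero_iff.1 h0).anti inter_subset_right).image F
    rw [hContent_eq_zero_of_subsingleton hn hsub]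
    exact zero_le
  have hfin : ediam E ≠ ⊤ := fun htop => by simp [htop] at hE
  set R := 2 * (ediam E).toReal
  have hR : ENNReal.ofReal R = 2 * ediam E := by
    rw [ENNReal.ofReal_mul zero_le_two, ENNReal.ofReal_toReal hfin, ENNReal.ofReal_ofNat]
  have hR0 : 0 < R := mul_pos two_pos (ENNReal.toReal_pos h0 hfin)
  have hRrbar : R < rbar := by
    rw [← hR] at hE
    exact (ENNReal.ofReal_lt_ofReal_iff'.1 hE).1
  have hball_sub : S ∩ T ∩ E ⊆ S ∩ ball p R := by
    rintro x ⟨⟨hxS, -⟩, hxE⟩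
    refine ⟨hxS, ?_⟩
    rw [mem_ball, ← edist_lt_ofReal, hR, two_mul]
    exact (edist_le_ediam_of_mem hxE hpE).trans_lt (ENNReal.lt_add_right hfin h0)
  calc hContent n (F '' (S ∩ T ∩ E)) ≤ hContent n (F '' (S ∩ ball p R)) :=
        hContent_mono (image_mono hball_sub)
    _ ≤ ENNReal.ofReal (ε * R ^ n) := hball p hpT R hR0 hRrbar
    _ = ENNReal.ofReal ε * (2 * ediam E) ^ n := by
        rw [ENNReal.ofReal_mul' (by positivity), ENNReal.ofReal_pow hR0.le, hR]

variable [MeasurableSpace X] [BorelSpace X]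

lemma hContent_image_inter_le_of_hausdorffMeasure_lt {ε rbar : ℝ} {c : ℝ≥0∞} (hn : n ≠ 0)
    (hrbar : 0 < rbar)
    (hball : ∀ p ∈ T, ∀ r : ℝ, 0 < r → r < rbar →
      hContent n (F '' (S ∩ ball p r)) ≤ ENNReal.ofReal (ε * r ^ n))
    (hS : μH[(n : ℝ)] S < c) :
    hContent n (F '' (S ∩ T)) ≤ ENNReal.ofReal ε * 2 ^ n * c := by
  obtain ⟨E, hcov, hdiam, hsum⟩ := exists_cover_tsum_ediam_rpow_lt (by positivity) hS
    (ENNReal.ofReal_pos.2 (by positivity : 0 < rbar / 3))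
  have hE (i : ℕ) : 2 * ediam (E i) < ENNReal.ofReal rbar :=
    calc 2 * ediam (E i) ≤ 2 * ENNReal.ofReal (rbar / 3) := by gcongr; exact hdiam i
      _ = ENNReal.ofReal (2 * (rbar / 3)) := by
        rw [ENNReal.ofReal_mul zero_le_two, ENNReal.ofReal_ofNat]
      _ < ENNReal.ofReal rbar := (ENNReal.ofReal_lt_ofReal_iff hrbar).2 (by linarith)
  have hsplit : F '' (S ∩ T) ⊆ ⋃ i, F '' (S ∩ T ∩ E i) := by
    rw [← image_iUnion, ← inter_iUnion]
    exact image_mono (subset_inter subset_rfl (inter_subset_left.trans hcov))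
  calc hContent n (F '' (S ∩ T)) ≤ ∑' i, hContent n (F '' (S ∩ T ∩ E i)) :=
        (hContent_mono hsplit).trans (hContent_iUnion_le hn _)
    _ ≤ ∑' i, ENNReal.ofReal ε * 2 ^ n * ediam (E i) ^ (n : ℝ) :=
        ENNReal.tsum_le_tsum fun i => (hContent_image_inter_le hn hball (hE i)).trans_eq
          (by rw [ENNReal.rpow_natCast, mul_pow, mul_assoc])
    _ = ENNReal.ofReal ε * 2 ^ n * ∑' i, ediam (E i) ^ (n : ℝ) := ENNReal.tsum_mul_left
    _ ≤ ENNReal.ofReal ε * 2 ^ n * c := by gcongr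

lemma hContent_image_inter_eq_zero (hn : n ≠ 0) (hS : μH[(n : ℝ)] S ≠ ⊤)
    (h : ∀ ε : ℝ, 0 < ε → ∃ rbar : ℝ, 0 < rbar ∧ ∀ p ∈ T, ∀ r : ℝ, 0 < r → r < rbar →
      hContent n (F '' (S ∩ ball p r)) ≤ ENNReal.ofReal (ε * r ^ n)) :
    hContent n (F '' (S ∩ T)) = 0 := by
  by_contra hne
  have hK : 2 ^ n * (μH[(n : ℝ)] S + 1) ≠ ⊤ := by finiteness
  obtain ⟨ε, hε, hlt⟩ := ENNReal.exists_nnreal_pos_mul_lt hK hne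
  obtain ⟨rbar, hrbar, hball⟩ := h ε hε
  have hle := hContent_image_inter_le_of_hausdorffMeasure_lt hn hrbar hball
    (ENNReal.lt_add_right hS one_ne_zero)
  rw [ENNReal.ofReal_coe_nnreal, mul_assoc] at hle
  exact lt_irrefl _ (hle.trans_lt hlt)

end ImageContent

/-- Let `F : X → Y` be any map and `S ⊆ X` with `Hⁿ(S) < ∞`. Suppose
`S = ⋃_j S_j` where for every `j` and every `ε > 0` there is `r̄ > 0` such that
`H^n_∞(F(S ∩ B_r(p))) ≤ ε·rⁿ` for every `p ∈ S_j` and every `r ∈ (0,r̄)`. Then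
`Hⁿ(F(S)) = 0`. -/
theorem statement13
    {X Y : Type*} [MetricSpace X] [MeasurableSpace X] [BorelSpace X]
    [MetricSpace Y] [MeasurableSpace Y] [BorelSpace Y]
    (n : ℕ) (hn : 1 ≤ n) (F : X → Y) (S : Set X)
    (hSfin : hausdorffPaper X n S < ⊤)
    (Sj : ℕ → Set X) (hcover : S = ⋃ j, Sj j)
    (h : ∀ j : ℕ, ∀ ε : ℝ, 0 < ε → ∃ rbar : ℝ, 0 < rbar ∧
      ∀ p ∈ Sj j, ∀ r : ℝ, 0 < r → r < rbar →
        hContent n (F '' (S ∩ Metric.ball p r)) ≤ ENNReal.ofReal (ε * r ^ n)) :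
    hausdorffPaper Y n (F '' S) = 0 := by
  have hn0 : n ≠ 0 := Nat.one_le_iff_ne_zero.1 hn
  have hS : μH[(n : ℝ)] S ≠ ⊤ := fun htop => by
    simp [hausdorffPaper, htop, ENNReal.mul_top (ofReal_omegaN_div_two_pow_ne_zero n)] at hSfin
  have hsplit : F '' S ⊆ ⋃ j, F '' (S ∩ Sj j) := by
    rw [← image_iUnion, ← inter_iUnion, ← hcover, inter_self]
  suffices μH[(n : ℝ)] (F '' S) = 0 by
    rw [hausdorffPaper, Measure.smul_apply, this, smul_zero]
  refine measure_mono_null hsplit (measure_iUnion_null fun j => ?_)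
  exact hausdorffMeasure_eq_zero_of_hContent_eq_zero hn0
    (hContent_image_inter_eq_zero hn0 hS (h j))

end
end
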